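/- arXiv:math/9703221 — 10 statements merged into one kernel-verified Lean document; each statement's English description precedes it below -/
import Mathlib

section
/- If R is a weakly productively bounded commutative integral domain, then for every uncountable family A of ideals of R whose intersection is the zero ideal, there exists a countable subfamily A' of A whose intersection is the zero ideal. -/
universe u v w

/-- A commutative integral domain `R` is *weakly productively bounded* if, for every family
`(M i)_{i : I}` of `R`-modules whose direct product is a torsion module, the annihilator
`ann_R (M i)` is nonzero for all but finitely many `i`. -/
def WeaklyProductivelyBounded (R : Type u) [CommRing R] [IsDomain R] : Prop :=
  ∀ (I : Type v) (M : I → Type w) [∀ i, AddCommGroup (M i)] [∀ i, Module R (M i)],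
    Module.IsTorsion R (∀ i, M i) →
      {i : I | Module.annihilator R (M i) = ⊥}.Finite

/-- If `R` is a weakly productively bounded commutative integral domain, then for every
uncountable family `A` of ideals of `R` whose intersection is the zero ideal, there is a
countable subfamily `A'` of `A` whose intersection is the zero ideal. -/
theorem countable_subfamily_of_weaklyProductivelyBounded
    (R : Type u) [CommRing R] [IsDomain R]
    (h : WeaklyProductivelyBounded.{u, u, u} R)
    (A : Set (Ideal R)) (hA : ¬ A.Countable) (hA0 : sInf A = ⊥) :
    ∃ A' ⊆ A, A'.Countable ∧ sInf A' = ⊥ := by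
  classical
  by_contra hcon
  push_neg at hcon
  -- the direct sum module
  set N : Type u := DirectSum A (fun i : A => R ⧸ (i : Ideal R)) with hN
  -- annihilator of N is ⊥
  have hann : Module.annihilator R N = ⊥ := by
    rw [eq_bot_iff]
    intro r hr
    rw [Module.mem_annihilator] at hr
    have : r ∈ sInf A := by
      rw [Submodule.mem_sInf]
      intro I hI
      have := hr (DirectSum.of (fun i : A => R ⧸ (i : Ideal R)) ⟨I, hI⟩
        (Submodule.Quotient.mk 1))
      rw [← DirectSum.of_smul] at this
      have h0 : DirectSum.of (fun i : A => R ⧸ (i : Ideal R)) ⟨I, hI⟩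
          (r • (Submodule.Quotient.mk 1 : R ⧸ I))
          = DirectSum.of (fun i : A => R ⧸ (i : Ideal R)) ⟨I, hI⟩ 0 := by
        rw [this, map_zero]
      have h2 := DirectSum.of_injective (β := fun i : A => R ⧸ (i : Ideal R)) ⟨I, hI⟩ h0
      rw [← Submodule.Quotient.mk_smul, Submodule.Quotient.mk_eq_zero] at h2
      simpa using h2
    rw [hA0] at this
    exact this
  -- the product is torsion
  have htor : Module.IsTorsion R (∀ _ : ULift.{u} ℕ, N) := by
    intro x
    set S : Set A := ⋃ n : ULift.{u} ℕ, ((x n).support : Set A) with hS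
    have hSc : S.Countable := Set.countable_iUnion (fun n => (x n).support.countable_toSet)
    set A' : Set (Ideal R) := Subtype.val '' S with hA'
    have hsub : A' ⊆ A := by rintro J ⟨⟨J, hJ⟩, _, rfl⟩; exact hJ
    have hne : sInf A' ≠ ⊥ := hcon A' hsub (hSc.image _)
    obtain ⟨r, hrmem, hr0⟩ := Submodule.exists_mem_ne_zero_of_ne_bot hne
    refine ⟨⟨r, mem_nonZeroDivisors_of_ne_zero hr0⟩, ?_⟩
    funext n
    show r • x n = 0
    refine DFinsupp.ext fun i => ?_
    rw [DirectSum.smul_apply, DirectSum.zero_apply]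
    by_cases hi : i ∈ (x n).support
    · have hri : r ∈ (i : Ideal R) := by
        rw [Submodule.mem_sInf] at hrmem
        exact hrmem _ ⟨i, Set.mem_iUnion.mpr ⟨n, hi⟩, rfl⟩
      obtain ⟨a, ha⟩ := Submodule.Quotient.mk_surjective _ (x n i)
      rw [← ha]
      rw [← Submodule.Quotient.mk_smul, Submodule.Quotient.mk_eq_zero]
      exact Ideal.mul_mem_right a _ hri
    · rw [DFinsupp.notMem_support_iff.mp hi, smul_zero]
  -- contradiction with wPB
  have hfin := h (ULift.{u} ℕ) (fun _ => N) htor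
  have : {i : ULift.{u} ℕ | Module.annihilator R N = ⊥} = Set.univ := by
    ext i; simp [hann]
  rw [this] at hfin
  exact Set.infinite_univ hfin
end

section
/- Let R be a commutative integral domain. Suppose there is a p-point ultrafilter U on omega, together with a family (A_n)_{n in omega} of ideals of R, such that for every subset Y of omega the intersection of the ideals A_n over n in Y is zero if and only if Y belongs to U. Then there is an uncountable family B of ideals of R whose intersection is zero, while the intersection of every countable subfamily B' of B is nonzero. -/
universe u v w

def IsPPoint (U : Ultrafilter ℕ) : Prop :=
  (∀ Y : Set ℕ, Y.Finite → Y ∉ U) ∧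
    ∀ N : ℕ → Set ℕ, Pairwise (fun k l => Disjoint (N k) (N l)) →
      (⋃ k, N k) = Set.univ → (∀ k, N k ∉ U) →
        ∃ Y ∈ U, ∀ k, (Y ∩ N k).Finite

section Aux

variable {R : Type u} [CommRing R]

/-- The ideal of elements lying in `A n` for all but finitely many `n ∈ S`. -/
def almostIdeal (A : ℕ → Ideal R) (S : Set ℕ) : Ideal R where
  carrier := {r | (S \ {n | r ∈ A n}).Finite}
  zero_mem' := by
    have h : S \ {n | (0 : R) ∈ A n} = ∅ := by
      ext n; simp [Submodule.zero_mem]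
    simp only [Set.mem_setOf_eq, h]
    exact Set.finite_empty
  add_mem' := by
    intro a b ha hb
    simp only [Set.mem_setOf_eq] at *
    refine (ha.union hb).subset ?_
    rintro n ⟨hnS, hn⟩
    simp only [Set.mem_setOf_eq] at hn
    by_cases h1 : a ∈ A n
    · exact Or.inr ⟨hnS, fun h2 => hn ((A n).add_mem h1 h2)⟩
    · exact Or.inl ⟨hnS, h1⟩
  smul_mem' := by
    intro c a ha
    simp only [Set.mem_setOf_eq, smul_eq_mul] at *
    refine ha.subset ?_
    rintro n ⟨hnS, hn⟩
    simp only [Set.mem_setOf_eq] at hn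
    exact ⟨hnS, fun h => hn (Ideal.mul_mem_left _ c h)⟩

lemma mem_almostIdeal {A : ℕ → Ideal R} {S : Set ℕ} {r : R} :
    r ∈ almostIdeal A S ↔ (S \ {n | r ∈ A n}).Finite := Iff.rfl

lemma union_not_mem {U : Ultrafilter ℕ} {S T : Set ℕ} (hS : S ∉ U) (hT : T ∉ U) :
    S ∪ T ∉ U := fun h => (Ultrafilter.union_mem_iff.mp h).elim hS hT

/-- The dual ideal of a p-point is a P-ideal: countably many sets not in `U`
are almost contained in a single set not in `U`. -/
lemma ppoint_bound {U : Ultrafilter ℕ} (hU : IsPPoint U) (T : ℕ → Set ℕ)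
    (hT : ∀ k, T k ∉ U) : ∃ S, S ∉ U ∧ ∀ k, (T k \ S).Finite := by
  set T' : ℕ → Set ℕ := fun k => Nat.rec (T 0) (fun n ih => ih ∪ T (n + 1)) k with hT'
  have hsucc : ∀ k, T' (k + 1) = T' k ∪ T (k + 1) := fun k => rfl
  have h0 : T' 0 = T 0 := rfl
  have hmono : ∀ j k, j ≤ k → T' j ⊆ T' k := by
    intro j k hjk
    induction k with
    | zero => have : j = 0 := Nat.le_zero.mp hjk; subst this; exact subset_rfl
    | succ n ih =>
      rcases Nat.le_succ_iff.mp hjk with h | h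
      · exact (ih h).trans Set.subset_union_left
      · subst h; exact subset_rfl
  have hTsub : ∀ k, T k ⊆ T' k := by
    intro k; cases k with
    | zero => exact subset_rfl
    | succ n => exact Set.subset_union_right
  have hT'notU : ∀ k, T' k ∉ U := by
    intro k; induction k with
    | zero => exact hT 0
    | succ n ih => exact union_not_mem ih (hT (n + 1))
  have hT'subU : ∀ k, T' k ⊆ ⋃ j, T j := by
    intro k; induction k with
    | zero => exact Set.subset_iUnion T 0
    | succ n ih => exact Set.union_subset ih (Set.subset_iUnion T (n + 1))
  by_cases hM : (⋃ j, T j) ∈ U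
  · -- partition case
    have hMnot : (⋃ j, T j)ᶜ ∉ U := fun h =>
      (Ultrafilter.compl_mem_iff_notMem.mp h) hM
    set N : ℕ → Set ℕ := fun k =>
      Nat.rec (T' 0 ∪ (⋃ j, T j)ᶜ) (fun n _ => T' (n + 1) \ T' n) k with hN
    have hN0 : N 0 = T' 0 ∪ (⋃ j, T j)ᶜ := rfl
    have hNs : ∀ k, N (k + 1) = T' (k + 1) \ T' k := fun _ => rfl
    have hNsub : ∀ k, N k ⊆ T' k ∪ (⋃ j, T j)ᶜ := by
      intro k; cases k with
      | zero => exact subset_rfl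
      | succ n => exact Set.diff_subset.trans Set.subset_union_left
    have hdis : ∀ k l, k < l → Disjoint (N k) (N l) := by
      intro k l hkl
      obtain ⟨m, rfl⟩ : ∃ m, l = m + 1 := ⟨l - 1, by omega⟩
      have hk : N k ⊆ T' m ∪ (⋃ j, T j)ᶜ :=
        (hNsub k).trans (Set.union_subset_union_left _ (hmono k m (by omega)))
      rw [Set.disjoint_left]
      intro x hxk hxl
      rw [hNs m] at hxl
      obtain ⟨hx1, hx2⟩ := hxl
      rcases hk hxk with h | h
      · exact hx2 h
      · exact h (hT'subU (m + 1) hx1)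
    have hpair : Pairwise (fun k l => Disjoint (N k) (N l)) := by
      intro k l hkl
      rcases lt_or_gt_of_ne hkl with h | h
      · exact hdis k l h
      · exact (hdis l k h).symm
    have hcover : (⋃ k, N k) = Set.univ := by
      ext x
      simp only [Set.mem_iUnion, Set.mem_univ, iff_true]
      by_cases hx : x ∈ ⋃ j, T j
      · obtain ⟨j, hj⟩ := Set.mem_iUnion.mp hx
        have : ∀ i, x ∈ T' i → ∃ k, x ∈ N k := by
          intro i
          induction i with
          | zero => intro h; exact ⟨0, Or.inl h⟩
          | succ n ih =>
            intro h
            by_cases hxn : x ∈ T' n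
            · exact ih hxn
            · exact ⟨n + 1, ⟨h, hxn⟩⟩
        exact this j (hTsub j hj)
      · exact ⟨0, Or.inr hx⟩
    have hnotU : ∀ k, N k ∉ U := by
      intro k; cases k with
      | zero => exact union_not_mem (hT'notU 0) hMnot
      | succ n =>
        intro h
        exact hT'notU (n + 1) (Filter.mem_of_superset h Set.diff_subset)
    obtain ⟨Y, hY, hYfin⟩ := hU.2 N hpair hcover hnotU
    refine ⟨Yᶜ, fun h => (Ultrafilter.compl_mem_iff_notMem.mp h) hY, ?_⟩
    intro k
    have hsubN : ∀ i, T' i ⊆ ⋃ j ∈ Set.Iic i, N j := by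
      intro i
      induction i with
      | zero =>
        intro x hx
        exact Set.mem_biUnion (Set.mem_Iic.mpr le_rfl) (Or.inl hx)
      | succ n ih =>
        intro x hx
        by_cases hxn : x ∈ T' n
        · obtain ⟨j, hj, hxj⟩ := Set.mem_iUnion₂.mp (ih hxn)
          exact Set.mem_biUnion (Set.mem_Iic.mpr ((Set.mem_Iic.mp hj).trans (Nat.le_succ n))) hxj
        · exact Set.mem_biUnion (Set.mem_Iic.mpr le_rfl) ⟨hx, hxn⟩
    have hss : T k \ Yᶜ ⊆ ⋃ j ∈ Set.Iic k, (Y ∩ N j) := by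
      rintro x ⟨hxT, hxY⟩
      have hxY' : x ∈ Y := by simpa using hxY
      obtain ⟨j, hj, hxj⟩ := Set.mem_iUnion₂.mp (hsubN k (hTsub k hxT))
      exact Set.mem_biUnion hj ⟨hxY', hxj⟩
    exact (((Set.finite_Iic k).biUnion fun j _ => hYfin j)).subset hss
  · exact ⟨⋃ j, T j, hM, fun k => by
      have : T k \ ⋃ j, T j = ∅ := by
        apply Set.diff_eq_empty.mpr (Set.subset_iUnion T k)
      rw [this]; exact Set.finite_empty⟩

variable {U : Ultrafilter ℕ} {A : ℕ → Ideal R}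

lemma exists_forall_mem (hA : ∀ Y : Set ℕ, (⨅ n ∈ Y, A n) = ⊥ ↔ Y ∈ U)
    {S : Set ℕ} (hS : S ∉ U) : ∃ r : R, r ≠ 0 ∧ ∀ n ∈ S, r ∈ A n := by
  have h : (⨅ n ∈ S, A n) ≠ ⊥ := fun h => hS ((hA S).mp h)
  obtain ⟨r, hrmem, hr0⟩ := (Submodule.ne_bot_iff _).mp h
  refine ⟨r, hr0, fun n hn => ?_⟩
  simp only [Submodule.mem_iInf] at hrmem
  exact hrmem n hn

lemma Zset_not_mem (hA : ∀ Y : Set ℕ, (⨅ n ∈ Y, A n) = ⊥ ↔ Y ∈ U)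
    {r : R} (hr : r ≠ 0) : {n | r ∈ A n} ∉ U := by
  intro h
  have hb : (⨅ n ∈ {n | r ∈ A n}, A n) = ⊥ := (hA _).mpr h
  have hmem : r ∈ (⨅ n ∈ {n | r ∈ A n}, A n) := by
    simp only [Submodule.mem_iInf]
    exact fun n hn => hn
  rw [hb] at hmem
  exact hr (by simpa using hmem)

lemma exists_avoid (hU : IsPPoint U) (hA : ∀ Y : Set ℕ, (⨅ n ∈ Y, A n) = ⊥ ↔ Y ∈ U)
    {r : R} (hr : r ≠ 0) : ∃ S, S ∉ U ∧ r ∉ almostIdeal A S := by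
  set Z := {n | r ∈ A n} with hZdef
  have hZ : Z ∉ U := Zset_not_mem hA hr
  have hZc : Zᶜ ∈ U := Ultrafilter.compl_mem_iff_notMem.mpr hZ
  have hZci : Zᶜ.Infinite := fun hfin => hU.1 _ hfin hZc
  let f := hZci.natEmbedding
  set H1 : Set ℕ := Set.range fun n => (f (2 * n) : ℕ) with hH1
  set H2 : Set ℕ := Set.range fun n => (f (2 * n + 1) : ℕ) with hH2
  have hcoe : Function.Injective fun k => ((f k : ℕ)) :=
    fun a b h => f.injective (Subtype.coe_injective h)
  have h1inf : H1.Infinite :=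
    Set.infinite_range_of_injective (fun a b h => by
      have := hcoe h; omega)
  have h2inf : H2.Infinite :=
    Set.infinite_range_of_injective (fun a b h => by
      have := hcoe h; omega)
  have h1sub : H1 ⊆ Zᶜ := by rintro x ⟨a, rfl⟩; exact (f (2 * a)).2
  have h2sub : H2 ⊆ Zᶜ := by rintro x ⟨a, rfl⟩; exact (f (2 * a + 1)).2
  have hdisj : H1 ∩ H2 = ∅ := by
    ext x
    simp only [Set.mem_inter_iff, Set.mem_empty_iff_false, iff_false, not_and]
    rintro ⟨a, rfl⟩ ⟨b, hb⟩
    have := hcoe hb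
    omega
  have key : H1 ∉ U ∨ H2 ∉ U := by
    by_contra h
    push_neg at h
    have : H1 ∩ H2 ∈ U := Filter.inter_mem h.1 h.2
    rw [hdisj] at this
    exact hU.1 ∅ Set.finite_empty this
  have main : ∀ S : Set ℕ, S ⊆ Zᶜ → S.Infinite → S ∉ U → ∃ S', S' ∉ U ∧ r ∉ almostIdeal A S' := by
    intro S hsub hinf hnot
    refine ⟨S, hnot, fun hmem => ?_⟩
    rw [mem_almostIdeal] at hmem
    exact hinf (hmem.subset fun x hx => ⟨hx, hsub hx⟩)
  rcases key with h | h
  · exact main H1 h1sub h1inf h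
  · exact main H2 h2sub h2inf h

lemma common_elt (hU : IsPPoint U) (hA : ∀ Y : Set ℕ, (⨅ n ∈ Y, A n) = ⊥ ↔ Y ∈ U)
    (S : ℕ → Set ℕ) (hS : ∀ k, S k ∉ U) :
    ∃ r : R, r ≠ 0 ∧ ∀ k, r ∈ almostIdeal A (S k) := by
  obtain ⟨Sb, hSb, hfin⟩ := ppoint_bound hU S hS
  obtain ⟨r, hr0, hr⟩ := exists_forall_mem hA hSb
  refine ⟨r, hr0, fun k => ?_⟩
  rw [mem_almostIdeal]
  refine (hfin k).subset ?_
  rintro n ⟨hn1, hn2⟩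
  exact ⟨hn1, fun hnb => hn2 (hr n hnb)⟩

end Aux

/-- Suppose there is a p-point ultrafilter `U` on `ℕ`, together with a family
`(A n)_{n : ℕ}` of ideals of the commutative integral domain `R`, such that for every
subset `Y` of `ℕ` the intersection of the ideals `A n`, for `n ∈ Y`, is zero if and only
if `Y ∈ U`.  Then there is an uncountable family `B` of ideals of `R` whose intersection
is zero, while the intersection of every countable subfamily of `B` is nonzero. -/
theorem exists_uncountable_family_of_pPoint
    (R : Type u) [CommRing R] [IsDomain R]
    (U : Ultrafilter ℕ) (hU : IsPPoint U)
    (A : ℕ → Ideal R) (hA : ∀ Y : Set ℕ, (⨅ n ∈ Y, A n) = ⊥ ↔ Y ∈ U) :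
    ∃ B : Set (Ideal R), ¬ B.Countable ∧ sInf B = ⊥ ∧
      ∀ B' ⊆ B, B'.Countable → sInf B' ≠ ⊥ := by
  refine ⟨almostIdeal A '' {S : Set ℕ | S ∉ U}, ?_, ?_, ?_⟩
  · intro hc
    have hne : (almostIdeal A '' {S : Set ℕ | S ∉ U}).Nonempty :=
      ⟨almostIdeal A ∅, ⟨∅, hU.1 ∅ Set.finite_empty, rfl⟩⟩
    obtain ⟨g, hg⟩ := hc.exists_eq_range hne
    have hgm : ∀ k, ∃ S, S ∉ U ∧ almostIdeal A S = g k := by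
      intro k
      have : g k ∈ almostIdeal A '' {S : Set ℕ | S ∉ U} := hg ▸ Set.mem_range_self k
      obtain ⟨S, hS1, hS2⟩ := this
      exact ⟨S, hS1, hS2⟩
    choose S hS hSe using hgm
    obtain ⟨r, hr0, hr⟩ := common_elt hU hA S hS
    obtain ⟨S', hS', hrn⟩ := exists_avoid hU hA hr0
    have hmem : almostIdeal A S' ∈ almostIdeal A '' {S : Set ℕ | S ∉ U} := ⟨S', hS', rfl⟩
    rw [hg] at hmem
    obtain ⟨k, hk⟩ := hmem
    exact hrn (hk ▸ hSe k ▸ hr k)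
  · apply (Submodule.eq_bot_iff _).mpr
    intro r hr
    by_contra hr0
    obtain ⟨S', hS', hrn⟩ := exists_avoid hU hA hr0
    exact hrn (Submodule.mem_sInf.mp hr _ ⟨S', hS', rfl⟩)
  · intro B' hsub hcnt
    rcases B'.eq_empty_or_nonempty with rfl | hne
    · intro h
      rw [sInf_empty] at h
      have h1 : (1 : R) ∈ (⊥ : Ideal R) := h ▸ Submodule.mem_top
      rw [Submodule.mem_bot] at h1
      exact one_ne_zero h1
    · obtain ⟨g, hg⟩ := hcnt.exists_eq_range hne
      have hgm : ∀ k, ∃ S, S ∉ U ∧ almostIdeal A S = g k := by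
        intro k
        have : g k ∈ almostIdeal A '' {S : Set ℕ | S ∉ U} :=
          hsub (hg ▸ Set.mem_range_self k)
        obtain ⟨S, hS1, hS2⟩ := this
        exact ⟨S, hS1, hS2⟩
      choose S hS hSe using hgm
      obtain ⟨r, hr0, hr⟩ := common_elt hU hA S hS
      refine (Submodule.ne_bot_iff _).mpr ⟨r, ?_, hr0⟩
      refine Submodule.mem_sInf.mpr fun J hJ => ?_
      rw [hg] at hJ
      obtain ⟨k, rfl⟩ := hJ
      exact hSe k ▸ hr k
end

section
/- For every commutative integral domain R, the dual ideal lattice L_R is transversally bounded if and only if it is uniformly transversally bounded. -/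
universe u v w

/-- The dual ideal lattice `L_R` of a domain `R` is *transversally bounded* if for every
family `(X i)_{i : I}` of nonempty sets of ideals of `R`, all of whose transversals have
nonzero intersection, the intersection of all ideals in `X i` is nonzero for all but
finitely many `i`.  (Joins in `L_R` are intersections of ideals, and the top element of
`L_R` is the zero ideal, so this is transversal boundedness of the lattice `L_R`.) -/
def IdealTB (R : Type u) [CommRing R] [IsDomain R] : Prop :=
  ∀ (I : Type v) (X : I → Set (Ideal R)), (∀ i, (X i).Nonempty) →
    (∀ A : I → Ideal R, (∀ i, A i ∈ X i) → (⨅ i, A i) ≠ ⊥) →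
      {i : I | sInf (X i) = ⊥}.Finite

/-- The dual ideal lattice `L_R` of a domain `R` is *uniformly transversally bounded* if
for every family `(X i)_{i : I}` of nonempty sets of ideals of `R`, all of whose
transversals have nonzero intersection, there is a cofinite subset `J` of `I` such that
the intersection of all the ideals in `⋃ i ∈ J, X i` is nonzero. -/
def IdealUTB (R : Type u) [CommRing R] [IsDomain R] : Prop :=
  ∀ (I : Type v) (X : I → Set (Ideal R)), (∀ i, (X i).Nonempty) →
    (∀ A : I → Ideal R, (∀ i, A i ∈ X i) → (⨅ i, A i) ≠ ⊥) →
      ∃ J : Set I, Jᶜ.Finite ∧ sInf (⋃ i ∈ J, X i) ≠ ⊥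

set_option linter.unusedSectionVars false

section TBAux

variable {R : Type u} [CommRing R] [IsDomain R] {I : Type v}

/-- A set `K` of indices is *small* (with respect to a family `C` of ideals) if there is
a single nonzero ring element lying in `C i` for every `i ∈ K`. -/
def IdealSmall (C : I → Ideal R) (K : Set I) : Prop :=
  ∃ r : R, r ≠ 0 ∧ ∀ i ∈ K, r ∈ C i

lemma idealSmall_mono {C : I → Ideal R} {K K' : Set I} (h : K ⊆ K')
    (hK' : IdealSmall C K') : IdealSmall C K := by
  obtain ⟨r, hr, hmem⟩ := hK'
  exact ⟨r, hr, fun i hi => hmem i (h hi)⟩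

lemma idealSmall_union {C : I → Ideal R} {K K' : Set I}
    (hK : IdealSmall C K) (hK' : IdealSmall C K') : IdealSmall C (K ∪ K') := by
  obtain ⟨r, hr, hmem⟩ := hK
  obtain ⟨r', hr', hmem'⟩ := hK'
  refine ⟨r * r', mul_ne_zero hr hr', fun i hi => ?_⟩
  rcases hi with hi | hi
  · exact Ideal.mul_mem_right _ _ (hmem i hi)
  · exact Ideal.mul_mem_left _ _ (hmem' i hi)

lemma idealSmall_empty (C : I → Ideal R) : IdealSmall C (∅ : Set I) :=
  ⟨1, one_ne_zero, fun i hi => absurd hi (Set.notMem_empty i)⟩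

lemma ideal_exists_mem_ne_zero {p : Ideal R} (h : p ≠ ⊥) : ∃ r ∈ p, r ≠ 0 := by
  by_contra hc
  push_neg at hc
  exact h ((Submodule.eq_bot_iff p).mpr hc)

lemma idealSmall_finite {C : I → Ideal R} {K : Set I} (hfin : K.Finite)
    (hC : ∀ i ∈ K, C i ≠ ⊥) : IdealSmall C K := by
  classical
  have hsel : ∀ i : I, ∃ r : R, (i ∈ K → (r ∈ C i ∧ r ≠ 0)) := by
    intro i
    by_cases hi : i ∈ K
    · obtain ⟨r, h1, h2⟩ := ideal_exists_mem_ne_zero (hC i hi)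
      exact ⟨r, fun _ => ⟨h1, h2⟩⟩
    · exact ⟨1, fun h => absurd h hi⟩
  choose f hf using hsel
  refine ⟨∏ i ∈ hfin.toFinset, f i, ?_, ?_⟩
  · rw [Finset.prod_ne_zero_iff]
    intro i hi
    exact (hf i (hfin.mem_toFinset.mp hi)).2
  · intro i hi
    have hit : i ∈ hfin.toFinset := hfin.mem_toFinset.mpr hi
    rw [← Finset.mul_prod_erase _ f hit]
    exact Ideal.mul_mem_right _ _ (hf i hi).1

/-- The "mod-finite saturation" of the intersection `⨅ i ∈ D, C i`: all elements that
lie in `C i` for all but finitely many `i ∈ D`. -/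
def CPlus (C : I → Ideal R) (D : Set I) : Ideal R where
  carrier := {r : R | {i : I | i ∈ D ∧ r ∉ C i}.Finite}
  zero_mem' := Set.Finite.subset Set.finite_empty
    (by rintro i ⟨hiD, h0⟩; exact h0 ((C i).zero_mem))
  add_mem' := by
    intro a b ha hb
    refine Set.Finite.subset (Set.Finite.union ha hb) ?_
    rintro i ⟨hiD, hab⟩
    by_cases h1 : a ∈ C i
    · exact Or.inr ⟨hiD, fun h2 => hab ((C i).add_mem h1 h2)⟩
    · exact Or.inl ⟨hiD, h1⟩
  smul_mem' := by
    intro c x hx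
    refine Set.Finite.subset hx ?_
    rintro i ⟨hiD, hcx⟩
    refine ⟨hiD, fun h => hcx ?_⟩
    simpa [smul_eq_mul] using Ideal.mul_mem_left (C i) c h

lemma mem_cPlus {C : I → Ideal R} {D : Set I} {r : R} :
    r ∈ CPlus C D ↔ {i : I | i ∈ D ∧ r ∉ C i}.Finite := Iff.rfl

end TBAux

/-- For every commutative integral domain `R`, the dual ideal lattice `L_R` is
transversally bounded if and only if it is uniformly transversally bounded. -/
theorem idealTB_iff_idealUTB (R : Type u) [CommRing R] [IsDomain R] :
    IdealTB.{u, v} R ↔ IdealUTB.{u, v} R := by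
  constructor
  · -- Hard direction: TB → UTB
    intro hTB I X hne hH
    by_contra hcon
    push_neg at hcon
    -- hcon : ∀ J : Set I, Jᶜ.Finite → sInf (⋃ i ∈ J, X i) = ⊥
    classical
    let C : I → Ideal R := fun i => sInf (X i)
    -- If the ideals of a set `S` of indices have a common nonzero element, then the
    -- inf of the corresponding union is nonzero; conversely a union with nonzero inf
    -- yields smallness.
    have small_iff : ∀ S : Set I, IdealSmall C S ↔ sInf (⋃ i ∈ S, X i) ≠ ⊥ := by
      intro S
      constructor
      · rintro ⟨r, hr0, hrS⟩ hbot
        have hr : r ∈ sInf (⋃ i ∈ S, X i) := by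
          rw [Submodule.mem_sInf]
          intro A hA
          rw [Set.mem_iUnion₂] at hA
          obtain ⟨i, hiS, hAX⟩ := hA
          exact sInf_le hAX (hrS i hiS)
        rw [hbot] at hr
        exact hr0 ((Submodule.mem_bot R).mp hr)
      · intro hnb
        obtain ⟨r, hrmem, hr0⟩ := ideal_exists_mem_ne_zero hnb
        refine ⟨r, hr0, fun i hi => ?_⟩
        show r ∈ sInf (X i)
        rw [Submodule.mem_sInf]
        intro A hA
        exact Submodule.mem_sInf.mp hrmem A (Set.mem_iUnion₂.mpr ⟨i, hi, hA⟩)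
    have key0 : ∀ J : Set I, Jᶜ.Finite → ¬ IdealSmall C J := by
      intro J hJ hsm
      exact ((small_iff J).mp hsm) (hcon J hJ)
    have sInf_union_bot : ∀ S : Set I, ¬ IdealSmall C S → sInf (⋃ i ∈ S, X i) = ⊥ := by
      intro S hS
      by_contra hnb
      exact hS ((small_iff S).mpr hnb)
    have union_nonempty : ∀ S : Set I, S.Nonempty → (⋃ i ∈ S, X i).Nonempty := by
      rintro S ⟨i, hi⟩
      obtain ⟨A, hA⟩ := hne i
      exact ⟨A, Set.mem_iUnion₂.mpr ⟨i, hi, hA⟩⟩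
    have notSmall_nonempty : ∀ S : Set I, ¬ IdealSmall C S → S.Nonempty := by
      intro S hS
      rcases Set.eq_empty_or_nonempty S with rfl | h
      · exact absurd (idealSmall_empty C) hS
      · exact h
    -- the contradiction engine: a ℕ-indexed family with all transversals nonzero but
    -- all infima ⊥ contradicts TB.
    haveI : Infinite (ULift.{v} ℕ) := Infinite.of_injective ULift.up
      (fun a b h => congrArg ULift.down h)
    have engine : ∀ W : ULift.{v} ℕ → Set (Ideal R),
        (∀ n, (W n).Nonempty) →
        (∀ A : ULift.{v} ℕ → Ideal R, (∀ n, A n ∈ W n) → (⨅ n, A n) ≠ ⊥) →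
        (∀ n, sInf (W n) = ⊥) → False := by
      intro W h1 h2 h3
      have hfin := hTB (ULift.{v} ℕ) W h1 h2
      have huniv : {n : ULift.{v} ℕ | sInf (W n) = ⊥} = Set.univ :=
        Set.eq_univ_of_forall h3
      rw [huniv] at hfin
      exact Set.infinite_univ hfin
    -- T₀ : the cofinite set of indices with nonzero inf
    have hBAD : {i : I | sInf (X i) = ⊥}.Finite := hTB I X hne hH
    let T₀ : Set I := {i : I | sInf (X i) ≠ ⊥}
    have hT₀compl : T₀ᶜ.Finite := by
      have h : T₀ᶜ = {i : I | sInf (X i) = ⊥} := by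
        ext i
        simp [T₀, Set.mem_compl_iff, not_not]
      rw [h]
      exact hBAD
    have hT₀pos : ¬ IdealSmall C T₀ := key0 T₀ hT₀compl
    have hT₀mem : ∀ i ∈ T₀, C i ≠ ⊥ := fun i hi => hi
    -- The "splittable" engine: infinitely many pairwise disjoint non-small sets
    -- contradict TB.
    have dOne : ∀ K : ℕ → Set I, (∀ n, ¬ IdealSmall C (K n)) →
        (∀ m n : ℕ, m ≠ n → ∀ x, x ∈ K m → x ∈ K n → False) → False := by
      intro K hKpos hKdisj
      refine engine (fun n => ⋃ i ∈ K n.down, X i)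
        (fun n => union_nonempty _ (notSmall_nonempty _ (hKpos n.down))) ?_
        (fun n => sInf_union_bot _ (hKpos n.down))
      intro A hA
      choose idx hidxK hidxX using fun n => Set.mem_iUnion₂.mp (hA n)
      have hinj : Function.Injective idx := by
        intro m n hmn
        by_contra hne2
        have hdown : m.down ≠ n.down := fun h => hne2 (ULift.down_injective h)
        refine hKdisj m.down n.down hdown (idx m) (hidxK m) ?_
        rw [hmn]
        exact hidxK n
      have hAbar : ∀ j : I, ∃ B : Ideal R, B ∈ X j ∧ (∀ n, idx n = j → B = A n) := by
        intro j
        by_cases hj : ∃ n, idx n = j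
        · obtain ⟨n, hn⟩ := hj
          refine ⟨A n, hn ▸ hidxX n, fun m hm => ?_⟩
          have hmn : m = n := hinj (by rw [hm, hn])
          rw [hmn]
        · exact ⟨(hne j).choose, (hne j).choose_spec, fun n hn => absurd ⟨n, hn⟩ hj⟩
      choose Abar hAbarX hAbarEq using hAbar
      have hlow := hH Abar hAbarX
      intro hbot
      apply hlow
      have hle : (⨅ j, Abar j) ≤ ⨅ n, A n := by
        refine le_iInf fun n => ?_
        refine le_trans (iInf_le _ (idx n)) ?_
        rw [hAbarEq (idx n) n rfl]
      rw [hbot] at hle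
      exact le_bot_iff.mp hle
    -- Get an unsplittable positive set T
    have hsplitT : ∃ T : Set I, T ⊆ T₀ ∧ ¬ IdealSmall C T ∧
        ∀ S : Set I, S ⊆ T → IdealSmall C S ∨ IdealSmall C (T \ S) := by
      by_contra hns
      push_neg at hns
      have step : ∀ T : Set I, T ⊆ T₀ ∧ ¬ IdealSmall C T →
          ∃ S : Set I, (¬ IdealSmall C S ∧ S ⊆ T) ∧
            ((T \ S) ⊆ T₀ ∧ ¬ IdealSmall C (T \ S)) := by
        rintro T ⟨hT1, hT2⟩
        obtain ⟨S, hS1, hS2, hS3⟩ := hns T hT1 hT2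
        exact ⟨S, ⟨hS2, hS1⟩, ⟨fun x hx => hT1 hx.1, hS3⟩⟩
      let seq : ℕ → {p : Set I // p ⊆ T₀ ∧ ¬ IdealSmall C p} := fun n =>
        Nat.rec ⟨T₀, subset_rfl, hT₀pos⟩
          (fun _ prev => ⟨prev.1 \ (step prev.1 prev.2).choose,
            ((step prev.1 prev.2).choose_spec).2⟩) n
      let K : ℕ → Set I := fun n => (step (seq n).1 (seq n).2).choose
      have hKspec : ∀ n, ¬ IdealSmall C (K n) ∧ K n ⊆ (seq n).1 :=
        fun n => ((step (seq n).1 (seq n).2).choose_spec).1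
      have hseqsucc : ∀ n, (seq (n + 1)).1 = (seq n).1 \ K n := fun n => rfl
      have hmono : ∀ m n : ℕ, m ≤ n → (seq n).1 ⊆ (seq m).1 := by
        intro m n hmn
        induction n with
        | zero =>
            have : m = 0 := Nat.le_zero.mp hmn
            rw [this]
        | succ n ih =>
            rcases Nat.lt_or_ge m (n + 1) with h | h
            · have h1 : (seq (n + 1)).1 ⊆ (seq n).1 := by
                rw [hseqsucc n]
                exact Set.diff_subset
              exact h1.trans (ih (Nat.lt_succ_iff.mp h))
            · have : m = n + 1 := le_antisymm hmn h
              rw [this]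
      have hdisj : ∀ m n : ℕ, m ≠ n → ∀ x, x ∈ K m → x ∈ K n → False := by
        have key : ∀ m n : ℕ, m < n → ∀ x, x ∈ K m → x ∈ K n → False := by
          intro m n hmn x hxm hxn
          have h1 : x ∈ (seq n).1 := (hKspec n).2 hxn
          have h2 : x ∈ (seq (m + 1)).1 := hmono (m + 1) n hmn h1
          rw [hseqsucc m] at h2
          exact h2.2 hxm
        intro m n hmn x hxm hxn
        rcases lt_or_gt_of_ne hmn with h | h
        · exact key m n h x hxm hxn
        · exact key n m h x hxn hxm
      exact dOne K (fun n => (hKspec n).1) hdisj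
    obtain ⟨T, hTsub, hTpos, hTdich⟩ := hsplitT
    -- P-ideal dichotomy on the small subsets of T
    by_cases hP1 : ∀ D : ℕ → Set I, (∀ n, D n ⊆ T ∧ IdealSmall C (D n)) →
        ∃ Dst : Set I, Dst ⊆ T ∧ IdealSmall C Dst ∧ ∀ n, (D n \ Dst).Finite
    · -- P-ideal case: use the constant family of saturated intersections CPlus
      refine engine
        (fun _ => {A : Ideal R | ∃ D : Set I, D ⊆ T ∧ IdealSmall C D ∧ A = CPlus C D})
        ?_ ?_ ?_
      · intro n
        exact ⟨CPlus C ∅, ⟨∅, Set.empty_subset T, idealSmall_empty C, rfl⟩⟩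
      · intro A hA
        simp only [Set.mem_setOf_eq] at hA
        choose D hDT hDsm hDeq using hA
        obtain ⟨Dst, hDstT, ⟨ρ, hρ0, hρmem⟩, hDfin⟩ :=
          hP1 (fun m : ℕ => D (ULift.up m)) (fun m => ⟨hDT _, hDsm _⟩)
        intro hbot
        have hρin : ρ ∈ ⨅ n, A n := by
          rw [Submodule.mem_iInf]
          intro n
          rw [hDeq n, mem_cPlus]
          refine Set.Finite.subset (hDfin n.down) ?_
          rintro i ⟨hiD, hiρ⟩
          refine ⟨hiD, fun hdst => hiρ (hρmem i hdst)⟩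
        rw [hbot] at hρin
        exact hρ0 ((Submodule.mem_bot R).mp hρin)
      · intro n
        by_contra hnb
        obtain ⟨r, hrmem, hr0⟩ := ideal_exists_mem_ne_zero hnb
        -- N : the set of indices in T whose ideal misses r; it is infinite
        set N : Set I := {i : I | i ∈ T ∧ r ∉ C i} with hN
        have hNT : N ⊆ T := fun i hi => hi.1
        have hNinf : N.Infinite := by
          intro hfin
          have hsmallN : IdealSmall C N :=
            idealSmall_finite hfin (fun i hi => hT₀mem i (hTsub (hNT hi)))
          have hrest : IdealSmall C (T \ N) := by
            refine ⟨r, hr0, fun i hi => ?_⟩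
            by_contra hri
            exact hi.2 ⟨hi.1, hri⟩
          refine hTpos (idealSmall_mono ?_ (idealSmall_union hsmallN hrest))
          intro i hi
          by_cases h : i ∈ N
          · exact Or.inl h
          · exact Or.inr ⟨hi, h⟩
        -- extract an infinite small subset Z of N
        obtain ⟨Z, hZN, hZinf, hZsmall⟩ :
            ∃ Z : Set I, Z ⊆ N ∧ Z.Infinite ∧ IdealSmall C Z := by
          let e := hNinf.natEmbedding
          let k₁ : ℕ → I := fun m => (e (2 * m) : I)
          let k₂ : ℕ → I := fun m => (e (2 * m + 1) : I)
          have hk₁inj : Function.Injective k₁ := by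
            intro a b hab
            have h1 := e.injective (Subtype.coe_injective hab)
            omega
          have hk₂inj : Function.Injective k₂ := by
            intro a b hab
            have h1 := e.injective (Subtype.coe_injective hab)
            omega
          have hZ₁N : Set.range k₁ ⊆ N := by
            rintro x ⟨m, rfl⟩
            exact (e (2 * m)).2
          have hZ₂N : Set.range k₂ ⊆ N := by
            rintro x ⟨m, rfl⟩
            exact (e (2 * m + 1)).2
          have hdisj12 : ∀ x, x ∈ Set.range k₁ → x ∈ Set.range k₂ → False := by
            rintro x ⟨a, rfl⟩ ⟨b, hb⟩
            have h1 := e.injective (Subtype.coe_injective hb)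
            omega
          rcases hTdich (Set.range k₁) (hZ₁N.trans hNT) with h | h
          · exact ⟨Set.range k₁, hZ₁N, Set.infinite_range_of_injective hk₁inj, h⟩
          · refine ⟨Set.range k₂, hZ₂N, Set.infinite_range_of_injective hk₂inj,
              idealSmall_mono ?_ h⟩
            rintro x hx
            exact ⟨hNT (hZ₂N hx), fun hx1 => hdisj12 x hx1 hx⟩
        have hmemW : CPlus C Z ∈
            {A : Ideal R | ∃ D : Set I, D ⊆ T ∧ IdealSmall C D ∧ A = CPlus C D} :=
          ⟨Z, hZN.trans hNT, hZsmall, rfl⟩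
        have hrZ : r ∈ CPlus C Z := sInf_le hmemW hrmem
        rw [mem_cPlus] at hrZ
        have hZeq : {i : I | i ∈ Z ∧ r ∉ C i} = Z := by
          ext i
          constructor
          · exact fun h => h.1
          · intro hi
            exact ⟨hi, (hZN hi).2⟩
        rw [hZeq] at hrZ
        exact hZinf hrZ
    · -- non-P-ideal case: use the tail family along the bad chain
      push_neg at hP1
      obtain ⟨D, hDok, hDbad⟩ := hP1
      let D' : ℕ → Set I := fun n => Nat.rec (D 0) (fun m prev => prev ∪ D (m + 1)) n
      have hD'succ : ∀ n, D' (n + 1) = D' n ∪ D (n + 1) := fun n => rfl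
      have hD'T : ∀ n, D' n ⊆ T := by
        intro n
        induction n with
        | zero => exact (hDok 0).1
        | succ n ih =>
            rw [hD'succ]
            exact Set.union_subset ih (hDok (n + 1)).1
      have hD'small : ∀ n, IdealSmall C (D' n) := by
        intro n
        induction n with
        | zero => exact (hDok 0).2
        | succ n ih =>
            rw [hD'succ]
            exact idealSmall_union ih (hDok (n + 1)).2
      have hDD' : ∀ n, D n ⊆ D' n := by
        intro n
        cases n with
        | zero => exact subset_rfl
        | succ n =>
            rw [hD'succ]
            exact Set.subset_union_right
      have hD'mono : ∀ m n : ℕ, m ≤ n → D' m ⊆ D' n := by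
        intro m n hmn
        induction n with
        | zero =>
            have : m = 0 := Nat.le_zero.mp hmn
            rw [this]
        | succ n ih =>
            rcases Nat.lt_or_ge m (n + 1) with h | h
            · refine (ih (Nat.lt_succ_iff.mp h)).trans ?_
              rw [hD'succ]
              exact Set.subset_union_left
            · have : m = n + 1 := le_antisymm hmn h
              rw [this]
      let S : ℕ → Set I := fun n => T \ D' n
      have hSpos : ∀ n, ¬ IdealSmall C (S n) := by
        intro n hsm
        refine hTpos (idealSmall_mono ?_ (idealSmall_union (hD'small n) hsm))
        intro i hi
        rcases Classical.em (i ∈ D' n) with h | h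
        · exact Or.inl h
        · exact Or.inr ⟨hi, h⟩
      refine engine (fun n => ⋃ i ∈ S n.down, X i)
        (fun n => union_nonempty _ (notSmall_nonempty _ (hSpos n.down))) ?_
        (fun n => sInf_union_bot _ (hSpos n.down))
      intro A hA
      choose k hkS hkX using fun n => Set.mem_iUnion₂.mp (hA n)
      have hkT : ∀ n, k n ∈ T := fun n => (hkS n).1
      have hRGsmall : IdealSmall C (Set.range k) := by
        rcases hTdich (Set.range k) (by rintro x ⟨n, rfl⟩; exact hkT n) with h | h
        · exact h
        · exfalso
          obtain ⟨n, hninf⟩ := hDbad (T \ Set.range k) Set.diff_subset h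
          refine hninf ?_
          have hsub : D n \ (T \ Set.range k) ⊆
              (fun m : ℕ => k (ULift.up m)) '' (Set.Iio n) := by
            rintro i ⟨hiD, hiNot⟩
            have hiT : i ∈ T := (hDok n).1 hiD
            have hiRG : i ∈ Set.range k := by
              by_contra hc
              exact hiNot ⟨hiT, hc⟩
            obtain ⟨m, rfl⟩ := hiRG
            refine ⟨m.down, ?_, rfl⟩
            rw [Set.mem_Iio]
            by_contra hge
            push_neg at hge
            have hmem' : k m ∈ D' m.down := hD'mono n m.down hge (hDD' n hiD)
            exact (hkS m).2 hmem'
          exact Set.Finite.subset ((Set.finite_Iio n).image _) hsub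
      obtain ⟨ρ, hρ0, hρmem⟩ := hRGsmall
      intro hbot
      have hρin : ρ ∈ ⨅ n, A n := by
        rw [Submodule.mem_iInf]
        intro n
        have h1 : ρ ∈ C (k n) := hρmem _ ⟨n, rfl⟩
        exact sInf_le (hkX n) h1
      rw [hbot] at hρin
      exact hρ0 ((Submodule.mem_bot R).mp hρin)
  · -- Easy direction: UTB → TB
    intro hUTB I X hne hH
    obtain ⟨J, hJc, hJne⟩ := hUTB I X hne hH
    refine hJc.subset ?_
    intro i hi
    simp only [Set.mem_setOf_eq] at hi
    rw [Set.mem_compl_iff]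
    intro hiJ
    apply hJne
    have h1 : X i ⊆ ⋃ j ∈ J, X j := Set.subset_biUnion_of_mem hiJ
    have h2 : sInf (⋃ j ∈ J, X j) ≤ sInf (X i) := sInf_le_sInf h1
    rw [hi] at h2
    exact le_bot_iff.mp h2
end

section
/- Let L be a complete lattice which is finitely join-irreducible and which is transversally bounded but not uniformly transversally bounded. Then there exists a p-point ultrafilter U on omega together with an injective map phi from L(U) to L preserving arbitrary joins (so the image of phi is a complete upper subsemilattice of L isomorphic to L(U)). -/
/-!
Transversal boundedness forbids infinitely many pairwise disjoint sets of indices of the family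
witnessing non-uniformity whose joins reach `⊤`, so some such "large" set cannot be split into two
large pieces. Transversal boundedness again extracts from it a sequence `b : ℕ → L` of elements
below `⊤` such that the sets `A ⊆ ℕ` with `⨆ n ∈ A, b n = ⊤` are exactly the members of a
p-point `V`.

Every `V`-large set contains a `V`-small *undominated* set: one whose join is not below the join
over any `V`-small set disjoint from it. Otherwise an increasing chain of small sets cuts the large
set into layers, each dominated by the next one, and then the even and the odd layers would both
be large. Cutting `ℕ` into undominated blocks `κ⁻¹{k}`, the map `A ↦ ⨆ n ∈ κ⁻¹ A, b n` becomes an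
injective join-preserving map `L(U) → L`, where the p-point `U` is the image of `V` under `κ`.
-/


universe u v w

/-- A complete lattice `L` is *transversally bounded* if for every family `(X i)_{i : I}`
of nonempty subsets of `L`, all of whose transversals are bounded (i.e. have join strictly
below the top element), the join of `X i` is strictly below the top element for all but
finitely many `i`. -/
def LatticeTB (L : Type u) [CompleteLattice L] : Prop :=
  ∀ (I : Type v) (X : I → Set L), (∀ i, (X i).Nonempty) →
    (∀ x : I → L, (∀ i, x i ∈ X i) → (⨆ i, x i) < ⊤) →
      {i : I | ¬ sSup (X i) < ⊤}.Finite

/-- A complete lattice `L` is *uniformly transversally bounded* if for every family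
`(X i)_{i : I}` of nonempty subsets of `L`, all of whose transversals are bounded, there
is a cofinite subset `J` of `I` such that the join of `⋃ i ∈ J, X i` is strictly below
the top element. -/
def LatticeUTB (L : Type u) [CompleteLattice L] : Prop :=
  ∀ (I : Type v) (X : I → Set L), (∀ i, (X i).Nonempty) →
    (∀ x : I → L, (∀ i, x i ∈ X i) → (⨆ i, x i) < ⊤) →
      ∃ J : Set I, Jᶜ.Finite ∧ sSup (⋃ i ∈ J, X i) < ⊤

/-- For a (nonprincipal) ultrafilter `U` on `ℕ`, the lattice `L(U)` consists of the
subsets of `ℕ` not belonging to `U`, together with `ℕ` itself, ordered by inclusion. -/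
abbrev LU (U : Ultrafilter ℕ) : Type :=
  {A : Set ℕ // A ∉ U ∨ A = Set.univ}

open scoped Classical in
/-- The join of a family of elements of `L(U)`: it is the union of the family if that
union does not belong to `U`, and the top element `ℕ` otherwise. -/
noncomputable def LU.join (U : Ultrafilter ℕ) (s : Set (LU U)) : LU U :=
  if h : (⋃ a ∈ s, a.1) ∈ U then ⟨Set.univ, Or.inr rfl⟩
  else ⟨⋃ a ∈ s, a.1, Or.inl h⟩

open Set Function

theorem IsPPoint.map {V : Ultrafilter ℕ} (hV : IsPPoint V) {κ : ℕ → ℕ}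
    (hfin : ∀ Y : Set ℕ, Y.Finite → Y ∉ V.map κ) : IsPPoint (V.map κ) := by
  refine ⟨hfin, fun N hN hcov hNV => ?_⟩
  obtain ⟨Y, hY, hYN⟩ := hV.2 (fun k => κ ⁻¹' N k) (fun k l hkl => (hN hkl).preimage κ)
    (by rw [← preimage_iUnion, hcov, preimage_univ]) hNV
  refine ⟨κ '' Y, V.mem_of_superset hY (subset_preimage_image κ Y), fun k => ?_⟩
  rw [← image_inter_preimage]
  exact (hYN k).image κ

theorem exists_indecomposable {ι : Type*} {P : Set ι → Prop} {S₀ : Set ι} (h₀ : P S₀)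
    (hD : ∀ D : ℕ → Set ι, Pairwise (Disjoint on D) → ¬ ∀ k, P (D k)) :
    ∃ S ⊆ S₀, P S ∧ ∀ T ⊆ S, P T → ¬ P (S \ T) := by
  by_contra! h
  choose T hTS hT hST using fun S : {S // S ⊆ S₀ ∧ P S} => h S.1 S.2.1 S.2.2
  let R : ℕ → {S // S ⊆ S₀ ∧ P S} := fun k =>
    Nat.rec ⟨S₀, subset_rfl, h₀⟩ (fun _ S => ⟨S.1 \ T S, sdiff_subset.trans S.2.1, hST S⟩) k
  have hR : Antitone fun k => (R k).1 := antitone_nat_of_succ_le fun k => sdiff_subset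
  refine hD (fun k => T (R k)) ((pairwise_disjoint_on _).2 fun j k hjk => ?_) fun k => hT _
  refine disjoint_of_subset_right ((hTS _).trans (hR (Nat.succ_le_of_lt hjk))) ?_
  exact disjoint_sdiff_right

section Extraction

variable {L : Type u} [CompleteLattice L]

theorem iSup_lt_top_of_injective {I : Type*} {X : I → Set L} (hne : ∀ i, (X i).Nonempty)
    (hX : ∀ x : I → L, (∀ i, x i ∈ X i) → ⨆ i, x i < ⊤) {J : Type*} {e : J → I}
    (he : Injective e) {z : J → L} (hz : ∀ j, z j ∈ X (e j)) : ⨆ j, z j < ⊤ := by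
  classical
  let x := extend e z fun i => (hne i).some
  have hx : ∀ i, x i ∈ X i := by
    intro i
    by_cases hi : ∃ j, e j = i
    · obtain ⟨j, rfl⟩ := hi
      simpa only [x, he.extend_apply] using hz j
    · simpa only [x, extend_apply' _ _ _ hi] using (hne i).some_mem
  refine lt_of_le_of_lt (iSup_le fun j => ?_) (hX x hx)
  simpa only [x, he.extend_apply] using le_iSup x (e j)

theorem LatticeTB.exists_seq_iSup_eq_top (htb : LatticeTB.{u, v} L) {ι : Type*} {g : ι → L}
    {s : ℕ → Set ι} (hs : ∀ k, (s k).Nonempty) (htop : ∀ k, ⨆ i ∈ s k, g i = ⊤) :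
    ∃ i : ℕ → ι, (∀ k, i k ∈ s k) ∧ ⨆ k, g (i k) = ⊤ := by
  suffices ∃ z : ℕ → L, (∀ k, z k ∈ g '' s k) ∧ ⨆ k, z k = ⊤ by
    obtain ⟨z, hz, hsup⟩ := this
    choose i hi hiz using hz
    exact ⟨i, hi, by simpa only [hiz] using hsup⟩
  by_contra! h
  have hfin := htb (ULift.{v} ℕ) (fun k => g '' s k.down) (fun k => (hs _).image g)
    fun z hz => lt_top_iff_ne_top.2 <| by
      simpa only [iSup_ulift] using h (fun k => z ⟨k⟩) fun k => hz ⟨k⟩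
  refine infinite_univ (hfin.subset fun k _ => ?_)
  simp [sSup_image, htop]

theorem nonempty_of_biSup_eq_top [Nontrivial L] {ι : Type*} {g : ι → L} {s : Set ι}
    (h : ⨆ i ∈ s, g i = ⊤) : s.Nonempty := by
  rw [nonempty_iff_ne_empty]
  rintro rfl
  simp at h

theorem SupIrred.exists_mem_eq_of_biSup_eq {a : L} (ha : SupIrred a) {ι : Type*} {s : Set ι}
    (hs : s.Finite) {g : ι → L} (h : ⨆ i ∈ s, g i = a) : ∃ i ∈ s, g i = a := by
  obtain ⟨i, hi, hia⟩ := ha.finset_sup_eq (s := hs.toFinset) (f := g)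
    (by simpa [Finset.sup_eq_iSup] using h)
  exact ⟨i, hs.mem_toFinset.1 hi, hia⟩

theorem not_forall_biSup_eq_top_of_pairwise_disjoint [Nontrivial L] (htb : LatticeTB.{u, v} L)
    {I : Type v} {X : I → Set L} (hne : ∀ i, (X i).Nonempty)
    (hX : ∀ x : I → L, (∀ i, x i ∈ X i) → ⨆ i, x i < ⊤) {D : ℕ → Set I}
    (hD : Pairwise (Disjoint on D)) : ¬ ∀ k, ⨆ i ∈ D k, sSup (X i) = ⊤ := by
  intro hbig
  have hW : ∀ k, (⋃ i ∈ D k, X i).Nonempty := fun k => by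
    obtain ⟨i, hi⟩ := nonempty_of_biSup_eq_top (hbig k)
    obtain ⟨x, hx⟩ := hne i
    exact ⟨x, mem_biUnion hi hx⟩
  obtain ⟨z, hzW, hz⟩ := htb.exists_seq_iSup_eq_top (g := id) hW
    fun k => by simpa only [id, ← sSup_eq_iSup, sSup_iUnion] using hbig k
  simp only [mem_iUnion] at hzW
  choose i hiD hzi using hzW
  have hi : Injective i := fun j k h => hD.eq (not_disjoint_iff.2 ⟨i j, hiD j, h ▸ hiD k⟩)
  exact (iSup_lt_top_of_injective hne hX hi hzi).ne hz

theorem exists_injective_iSup_eq_top (hirr : SupIrred (⊤ : L)) (htb : LatticeTB.{u, v} L)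
    {ι : Type*} {g : ι → L} {S : Set ι} (hlt : ∀ i ∈ S, g i ≠ ⊤) (hS : ⨆ i ∈ S, g i = ⊤) :
    ∃ e : ℕ → ι, Injective e ∧ range e ⊆ S ∧ ⨆ n, g (e n) = ⊤ := by
  have : Nontrivial L := nontrivial_of_ne _ _ hirr.ne_bot
  obtain ⟨i, hiS, hi⟩ := htb.exists_seq_iSup_eq_top (s := fun _ => S)
    (fun _ => nonempty_of_biSup_eq_top hS) fun _ => hS
  have hinf : (range i).Infinite := fun hfin => by
    obtain ⟨_, ⟨k, rfl⟩, hk⟩ := hirr.exists_mem_eq_of_biSup_eq hfin (by rwa [iSup_range])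
    exact hlt _ (hiS k) hk
  have : Countable (range i) := (countable_range i).to_subtype
  have : Infinite (range i) := hinf.to_subtype
  obtain ⟨_⟩ := nonempty_denumerable (range i)
  let e : ℕ ≃ range i := (Denumerable.eqv (range i)).symm
  refine ⟨fun n => e n, Subtype.val_injective.comp e.injective, ?_, ?_⟩
  · rintro _ ⟨n, rfl⟩
    obtain ⟨k, hk⟩ := (e n).2
    show (e n : ι) ∈ S
    rw [← hk]
    exact hiS k
  · show ⨆ n, g (e n : ι) = ⊤
    rw [e.iSup_comp (g := fun t : range i => g t), iSup_range', hi]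

theorem exists_ultrafilter_biSup_eq_top_iff {ι : Type*} {b : ι → L} (hirr : SupIrred (⊤ : L))
    (htop : ⨆ i, b i = ⊤)
    (hdisj : ∀ A B : Set ι, Disjoint A B → ⨆ i ∈ A, b i = ⊤ → ⨆ i ∈ B, b i ≠ ⊤) :
    ∃ V : Ultrafilter ι, ∀ A, ⨆ i ∈ A, b i = ⊤ ↔ A ∈ V := by
  have hcompl : ∀ A : Set ι, ⨆ i ∈ Aᶜ, b i = ⊤ ↔ ¬ ⨆ i ∈ A, b i = ⊤ := by
    refine fun A => ⟨fun h hA => hdisj A Aᶜ disjoint_compl_right hA h, fun h => ?_⟩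
    have : (⨆ i ∈ A, b i) ⊔ ⨆ i ∈ Aᶜ, b i = ⊤ := by
      rw [← iSup_union, union_compl_self, iSup_univ, htop]
    exact (hirr.2 this).resolve_left h
  let F : Filter ι :=
    { sets := {A | ⨆ i ∈ A, b i = ⊤}
      univ_sets := by simpa only [mem_ofPred_eq, iSup_univ] using htop
      sets_of_superset := fun hA hAB => top_unique (hA ▸ biSup_mono hAB)
      inter_sets := fun {A B} hA hB => by
        by_contra h
        rw [mem_ofPred_eq, ← hcompl, compl_inter, iSup_union] at h
        exact (hirr.2 h).elim (fun h => (hcompl A).1 h hA) fun h => (hcompl B).1 h hB }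
  exact ⟨.ofComplNotMemIff F fun A => (not_congr (hcompl A)).trans not_not, fun A => Iff.rfl⟩

theorem isPPoint_of_biSup_eq_top_iff (htb : LatticeTB.{u, v} L) {V : Ultrafilter ℕ} {b : ℕ → L}
    (hbV : ∀ A, ⨆ n ∈ A, b n = ⊤ ↔ A ∈ V) (hb : ∀ n, b n ≠ ⊤) : IsPPoint V := by
  refine ⟨fun Y hY hYV => ?_, fun N hN hcov hNV => ?_⟩
  · obtain ⟨n, -, rfl⟩ := Ultrafilter.eq_pure_of_finite_mem hY hYV
    exact hb n (by simpa using (hbV {n}).2 rfl)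
  have htail : ∀ j, (⋃ m, ⋃ (_ : j < m), N m) ∈ V := by
    intro j
    have hhead : (⋃ m ∈ Iic j, N m) ∉ V := fun h => by
      obtain ⟨m, -, hm⟩ := (Ultrafilter.finite_biUnion_mem_iff (finite_Iic j)).1 h
      exact hNV m hm
    refine V.mem_of_superset (V.compl_mem_iff_notMem.2 hhead) fun n hn => ?_
    obtain ⟨m, hm⟩ := mem_iUnion.1 (hcov ▸ mem_univ n)
    exact mem_iUnion₂.2 ⟨m, not_le.1 fun hmj => hn (mem_biUnion hmj hm), hm⟩
  obtain ⟨n, hn, hsup⟩ := htb.exists_seq_iSup_eq_top (g := b)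
    (fun j => V.nonempty_of_mem (htail j)) fun j => (hbV _).2 (htail j)
  refine ⟨range n, (hbV _).1 (by rwa [iSup_range]), fun k => ((finite_Iio k).image n).subset ?_⟩
  rintro _ ⟨⟨j, rfl⟩, hjk⟩
  obtain ⟨m, hjm, hm⟩ := mem_iUnion₂.1 (hn j)
  exact mem_image_of_mem n (show j < k from hN.eq (not_disjoint_iff.2 ⟨_, hm, hjk⟩) ▸ hjm)

theorem exists_family_of_not_latticeUTB (htb : LatticeTB.{u, v} L)
    (hnutb : ¬ LatticeUTB.{u, v} L) :
    ∃ (I : Type v) (X : I → Set L), (∀ i, (X i).Nonempty) ∧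
      (∀ x : I → L, (∀ i, x i ∈ X i) → ⨆ i, x i < ⊤) ∧
        ⨆ i ∈ {i | sSup (X i) < ⊤}, sSup (X i) = ⊤ := by
  simp only [LatticeUTB, not_forall, not_exists, not_and] at hnutb
  obtain ⟨I, X, hne, hX, hcof⟩ := hnutb
  refine ⟨I, X, hne, hX, ?_⟩
  have := hcof {i | sSup (X i) < ⊤} (htb I X hne hX)
  simpa only [sSup_iUnion, not_lt_top_iff] using this

theorem exists_pPoint_biSup_eq_top_iff (hfji : ∀ a b : L, a < ⊤ → b < ⊤ → a ⊔ b < ⊤)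
    (htb : LatticeTB.{u, v} L) (hnutb : ¬ LatticeUTB.{u, v} L) :
    ∃ V : Ultrafilter ℕ, IsPPoint V ∧ ∃ b : ℕ → L, ∀ A, ⨆ n ∈ A, b n = ⊤ ↔ A ∈ V := by
  obtain ⟨I, X, hne, hX, hJ⟩ := exists_family_of_not_latticeUTB htb hnutb
  have : Nontrivial L := nontrivial_of_lt _ _ (bot_le.trans_lt (hX _ fun i => (hne i).some_mem))
  have hirr : SupIrred (⊤ : L) := ⟨not_isMin_top, fun x y h => by
    by_contra! hxy
    exact (hfji x y (lt_top_iff_ne_top.2 hxy.1) (lt_top_iff_ne_top.2 hxy.2)).ne h⟩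
  obtain ⟨S, hSJ, hS, hSind⟩ := exists_indecomposable (P := fun S => ⨆ i ∈ S, sSup (X i) = ⊤) hJ
    fun D hD => not_forall_biSup_eq_top_of_pairwise_disjoint htb hne hX hD
  obtain ⟨e, he, heS, hetop⟩ := exists_injective_iSup_eq_top hirr htb (fun i hi => (hSJ hi).ne) hS
  have hdisj : ∀ A B : Set ℕ, Disjoint A B → ⨆ n ∈ A, sSup (X (e n)) = ⊤ →
      ⨆ n ∈ B, sSup (X (e n)) ≠ ⊤ := by
    intro A B hAB hA hB
    rw [← iSup_image (f := e) (g := fun i => sSup (X i))] at hA hB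
    refine hSind (e '' A) (image_subset_iff.2 fun n _ => heS ⟨n, rfl⟩) hA
      (top_unique (hB.ge.trans (biSup_mono ?_)))
    rintro _ ⟨n, hn, rfl⟩
    exact ⟨heS ⟨n, rfl⟩, fun ⟨m, hm, hmn⟩ => hAB.ne_of_mem hm hn (he hmn)⟩
  obtain ⟨V, hbV⟩ := exists_ultrafilter_biSup_eq_top_iff hirr hetop hdisj
  exact ⟨V, isPPoint_of_biSup_eq_top_iff htb hbV fun n => (hSJ (heS ⟨n, rfl⟩)).ne, _, hbV⟩

end Extraction

section Undominated

variable {L : Type u} [CompleteLattice L]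

def Undominated {ι : Type*} (V : Ultrafilter ι) (b : ι → L) (P : Set ι) : Prop :=
  ∀ R, Disjoint P R → R ∉ V → ¬ ⨆ n ∈ P, b n ≤ ⨆ n ∈ R, b n

theorem Undominated.mono {ι : Type*} {V : Ultrafilter ι} {b : ι → L} {P Q : Set ι}
    (hP : Undominated V b P) (hPQ : P ⊆ Q) : Undominated V b Q := fun R hQR hR hle =>
  hP R (hQR.mono_left hPQ) hR ((biSup_mono hPQ).trans hle)

variable {V : Ultrafilter ℕ} {b : ℕ → L}

theorem mem_of_biSup_le (hbV : ∀ A, ⨆ n ∈ A, b n = ⊤ ↔ A ∈ V) {X Y : Set ℕ} (hX : X ∈ V)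
    (h : ⨆ n ∈ X, b n ≤ ⨆ n ∈ Y, b n) : Y ∈ V :=
  (hbV Y).1 (top_unique (((hbV X).2 hX).ge.trans h))

theorem mem_of_biSup_le_succ (hbV : ∀ A, ⨆ n ∈ A, b n = ⊤ ↔ A ∈ V) {C : Set ℕ}
    {D : ℕ → Set ℕ} (hD : Pairwise (Disjoint on D)) (hcov : Cᶜ ⊆ ⋃ k, D k)
    (hle : ∀ k, ⨆ n ∈ D k, b n ≤ ⨆ n ∈ C ∪ D (k + 1), b n) : C ∈ V := by
  by_contra hC
  have key : ∀ S : Set ℕ, (∀ k ∈ S, k + 1 ∉ S) → (⋃ k ∈ S, D k) ∉ V := by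
    intro S hS hSV
    have hdom : ⨆ n ∈ ⋃ k ∈ S, D k, b n ≤ ⨆ n ∈ C ∪ ⋃ k ∈ Sᶜ, D k, b n := by
      simp only [iSup_iUnion]
      exact iSup₂_le fun k hk => (hle k).trans <|
        biSup_mono fun n => Or.imp_right fun hn => mem_biUnion (hS k hk) hn
    have hSc : (⋃ k ∈ Sᶜ, D k) ∈ V :=
      (Ultrafilter.union_mem_iff.1 (mem_of_biSup_le hbV hSV hdom)).resolve_left hC
    have hdisj : Disjoint (⋃ k ∈ S, D k) (⋃ k ∈ Sᶜ, D k) := by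
      simp only [disjoint_iUnion_left, disjoint_iUnion_right]
      exact fun k hk l hl => hD (ne_of_mem_of_not_mem hl hk)
    exact V.compl_notMem_iff.2 hSV (V.mem_of_superset hSc hdisj.subset_compl_left)
  have hcover : (⋃ k ∈ {k | Even k}, D k) ∪ ⋃ k ∈ {k | Even k}ᶜ, D k ∈ V := by
    rw [← biUnion_union, union_compl_self, biUnion_univ]
    exact V.mem_of_superset (V.compl_mem_iff_notMem.2 hC) hcov
  rcases Ultrafilter.union_mem_iff.1 hcover with h | h
  · exact key {k | Even k} (fun k hk h => Nat.even_add_one.1 h hk) h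
  · exact key {k | Even k}ᶜ (fun k hk h => h (Nat.even_add_one.2 hk)) h

theorem exists_undominated_subset (hbV : ∀ A, ⨆ n ∈ A, b n = ⊤ ↔ A ∈ V)
    (hfin : ∀ Y : Set ℕ, Y.Finite → Y ∉ V) {A : Set ℕ} (hA : A ∈ V) :
    ∃ P ⊆ A, P ∉ V ∧ Undominated V b P := by
  by_contra! h
  simp only [Undominated, not_forall, not_not, exists_prop] at h
  choose R hRdisj hRV hRle using fun T : {T : Set ℕ // T ⊆ A ∧ T ∉ V} => h T.1 T.2.1 T.2.2
  have hstep : ∀ (k : ℕ) (T : {T : Set ℕ // T ⊆ A ∧ T ∉ V}),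
      T.1 ∪ (R T ∩ A) ∪ (A ∩ {k}) ⊆ A ∧ T.1 ∪ (R T ∩ A) ∪ (A ∩ {k}) ∉ V := fun k T =>
    ⟨union_subset (union_subset T.2.1 inter_subset_right) inter_subset_left, by
      simp only [Ultrafilter.union_mem_iff, not_or]
      exact ⟨⟨T.2.2, fun h => hRV T (V.mem_of_superset h inter_subset_left)⟩,
        hfin _ ((finite_singleton k).subset inter_subset_right)⟩⟩
  let T : ℕ → {T : Set ℕ // T ⊆ A ∧ T ∉ V} := fun k =>
    Nat.rec ⟨∅, empty_subset A, V.empty_notMem⟩ (fun k T => ⟨_, hstep k T⟩) k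
  have hT : Monotone fun k => (T k).1 :=
    monotone_nat_of_le_succ fun k => subset_union_left.trans subset_union_left
  refine V.compl_notMem_iff.2 hA <|
    mem_of_biSup_le_succ hbV (D := disjointed fun k => (T k).1) (disjoint_disjointed _) ?_
      fun k => ?_
  · rw [compl_compl, iUnion_disjointed]
    exact fun n hn => mem_iUnion.2 ⟨n + 1, Or.inr ⟨hn, rfl⟩⟩
  have hsucc := hT.disjointed_succ (not_isMax k)
  rw [Order.succ_eq_add_one] at hsucc
  calc ⨆ n ∈ disjointed (fun k => (T k).1) k, b n ≤ ⨆ n ∈ (T k).1, b n :=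
        biSup_mono (disjointed_subset _ k)
    _ ≤ ⨆ n ∈ R (T k), b n := hRle _
    _ ≤ _ := biSup_mono fun n hn => by
      rw [hsucc]
      by_cases hnA : n ∈ A
      · exact Or.inr ⟨Or.inl (Or.inr ⟨hn, hnA⟩), (hRdisj _).notMem_of_mem_right hn⟩
      · exact Or.inl hnA

theorem exists_undominated_fibres (hbV : ∀ A, ⨆ n ∈ A, b n = ⊤ ↔ A ∈ V)
    (hfin : ∀ Y : Set ℕ, Y.Finite → Y ∉ V) :
    ∃ κ : ℕ → ℕ, ∀ k, κ ⁻¹' {k} ∉ V ∧ Undominated V b (κ ⁻¹' {k}) := by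
  classical
  choose P hPA hPV hP using fun A (hA : A ∈ V) => exists_undominated_subset hbV hfin hA
  -- `D k` is the union of the first `k` blocks; block `k` adds an undominated subset of
  -- `(D k)ᶜ` and the point `k` itself.
  have hstep : ∀ (k : ℕ) (D : {D : Set ℕ // D ∉ V}),
      D.1 ∪ P D.1ᶜ (V.compl_mem_iff_notMem.2 D.2) ∪ {k} ∉ V := fun k D => by
    simp only [Ultrafilter.union_mem_iff, not_or]
    exact ⟨⟨D.2, hPV _ _⟩, hfin _ (finite_singleton k)⟩
  let D : ℕ → {D : Set ℕ // D ∉ V} := fun k =>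
    Nat.rec ⟨∅, V.empty_notMem⟩ (fun k D => ⟨_, hstep k D⟩) k
  have hD : Monotone fun k => (D k).1 :=
    monotone_nat_of_le_succ fun k => subset_union_left.trans subset_union_left
  have hcov : ∀ n, ∃ k, n ∈ (D (k + 1)).1 := fun n => ⟨n, Or.inr rfl⟩
  refine ⟨fun n => Nat.find (hcov n), fun k => ?_⟩
  rw [preimage_find_eq_disjointed]
  refine ⟨fun h => (D (k + 1)).2 (V.mem_of_superset h (disjointed_subset _ k)),
    (hP _ (V.compl_mem_iff_notMem.2 (D k).2)).mono ?_⟩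
  rw [disjointed_eq_inter_compl]
  exact subset_inter (subset_union_right.trans subset_union_left) <|
    subset_iInter₂ fun j hj => (hPA _ _).trans (compl_subset_compl.2 (hD hj))

end Undominated

section Embedding

variable {L : Type u} [CompleteLattice L] {V : Ultrafilter ℕ} {b : ℕ → L} {κ : ℕ → ℕ}

theorem subset_of_biSup_preimage_le (hκ : ∀ k, Undominated V b (κ ⁻¹' {k}))
    {a a' : LU (V.map κ)} (h : ⨆ n ∈ κ ⁻¹' a.1, b n ≤ ⨆ n ∈ κ ⁻¹' a'.1, b n) : a.1 ⊆ a'.1 := by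
  intro k hk
  by_contra hk'
  have ha' : κ ⁻¹' a'.1 ∉ V := a'.2.resolve_right fun h => hk' (h.symm ▸ mem_univ k)
  exact hκ k _ ((disjoint_singleton_left.2 hk').preimage κ) ha'
    ((biSup_mono (preimage_mono (singleton_subset_iff.2 hk))).trans h)

theorem biSup_preimage_join (hbV : ∀ A, ⨆ n ∈ A, b n = ⊤ ↔ A ∈ V) (s : Set (LU (V.map κ))) :
    ⨆ n ∈ κ ⁻¹' (LU.join _ s).1, b n = ⨆ a ∈ s, ⨆ n ∈ κ ⁻¹' a.1, b n := by
  have hunion : ⨆ n ∈ κ ⁻¹' ⋃ a ∈ s, a.1, b n = ⨆ a ∈ s, ⨆ n ∈ κ ⁻¹' a.1, b n := by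
    simp only [preimage_iUnion, iSup_iUnion]
  unfold LU.join
  split_ifs with h
  · rw [← hunion, (hbV _).2 h, preimage_univ, (hbV _).2 V.univ_mem]
  · exact hunion

theorem exists_pPoint_LU_embedding_of_isPPoint (hV : IsPPoint V)
    (hbV : ∀ A, ⨆ n ∈ A, b n = ⊤ ↔ A ∈ V) :
    ∃ U : Ultrafilter ℕ, IsPPoint U ∧ ∃ φ : LU U → L, Injective φ ∧
      ∀ s : Set (LU U), φ (LU.join U s) = ⨆ a ∈ s, φ a := by
  obtain ⟨κ, hκ⟩ := exists_undominated_fibres hbV hV.1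
  have hfin : ∀ Y : Set ℕ, Y.Finite → Y ∉ V.map κ := fun Y hY hYU => by
    obtain ⟨k, -, hk⟩ := Ultrafilter.eq_pure_of_finite_mem hY hYU
    exact (hκ k).1 (Ultrafilter.mem_map.1 (hk ▸ rfl))
  refine ⟨V.map κ, hV.map hfin, fun a => ⨆ n ∈ κ ⁻¹' a.1, b n, fun a a' h => ?_,
    biSup_preimage_join hbV⟩
  exact Subtype.ext ((subset_of_biSup_preimage_le (fun k => (hκ k).2) h.le).antisymm
    (subset_of_biSup_preimage_le (fun k => (hκ k).2) h.ge))

end Embedding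

/-- Let `L` be a complete lattice which is finitely join-irreducible (the top element is
not the join of two strictly smaller elements) and which is transversally bounded but not
uniformly transversally bounded.  Then there is a p-point ultrafilter `U` on `ℕ` together
with an injective map `φ : L(U) → L` preserving arbitrary joins, so that the image of `φ`
is a complete upper subsemilattice of `L` isomorphic to `L(U)`. -/
theorem exists_pPoint_and_LU_embedding_of_TB_not_UTB
    (L : Type u) [CompleteLattice L]
    (hfji : ∀ a b : L, a < ⊤ → b < ⊤ → a ⊔ b < ⊤)
    (htb : LatticeTB.{u, v} L) (hnutb : ¬ LatticeUTB.{u, v} L) :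
    ∃ U : Ultrafilter ℕ, IsPPoint U ∧
      ∃ φ : LU U → L, Function.Injective φ ∧
        ∀ s : Set (LU U), φ (LU.join U s) = ⨆ a ∈ s, φ a := by
  obtain ⟨V, hV, b, hbV⟩ := exists_pPoint_biSup_eq_top_iff hfji htb hnutb
  exact exists_pPoint_LU_embedding_of_isPPoint hV hbV
end

section
/- If there exists a complete finitely join-irreducible lattice which is transversally bounded but not uniformly transversally bounded, then there exists a p-point ultrafilter on omega. Equivalently, if no p-point ultrafilter on omega exists, then every transversally bounded complete finitely join-irreducible lattice is uniformly transversally bounded. -/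
universe u v w

/-! Let `X : I → Set L` witness the failure of UTB, put `a i = sSup (X i)` and call `A ⊆ I`
large when `⨆ i ∈ A, a i = ⊤`; every cofinite set is large. TB, applied to suitable families
indexed by `ℕ`, gives three things: there are no infinitely many pairwise disjoint large sets,
so some large set `S` of indices with `a i < ⊤` cannot be split into two large parts; every
large set has a countable large subset, which lets us replace `S` by `ℕ`; and along the tails
of a partition of `ℕ` into small sets the joins stay `⊤`, which forces the p-point property of
the ultrafilter of large subsets of `ℕ` (an ultrafilter by finite join-irreducibility). -/

open Set Function

section

variable {L : Type u} [CompleteLattice L] {ι : Type w}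

theorem biSup_lt_top_of_finite [Nontrivial L] (hfji : ∀ a b : L, a < ⊤ → b < ⊤ → a ⊔ b < ⊤)
    {a : ι → L} {s : Set ι} (hs : s.Finite) (ha : ∀ i ∈ s, a i < ⊤) : ⨆ i ∈ s, a i < ⊤ := by
  induction s, hs using Set.Finite.induction_on with
  | empty => simp
  | @insert i s _ _ ih =>
    rw [iSup_insert]
    exact hfji _ _ (ha i (mem_insert i s)) (ih fun j hj => ha j (mem_insert_of_mem i hj))

theorem exists_ultrafilter_mem_iff_biSup_eq_top [Nontrivial L]
    (hfji : ∀ a b : L, a < ⊤ → b < ⊤ → a ⊔ b < ⊤) {b : ι → L} (htop : ⨆ i, b i = ⊤)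
    (hatom : ∀ s : Set ι, ⨆ i ∈ s, b i = ⊤ → ⨆ i ∈ sᶜ, b i < ⊤) :
    ∃ U : Ultrafilter ι, ∀ s, s ∈ U ↔ ⨆ i ∈ s, b i = ⊤ := by
  have hcompl : ∀ s : Set ι, ⨆ i ∈ sᶜ, b i < ⊤ ↔ ⨆ i ∈ s, b i = ⊤ := by
    refine fun s => ⟨fun hsc => ?_, hatom s⟩
    by_contra hs
    have := hfji _ _ (lt_top_iff_ne_top.2 hs) hsc
    rw [← iSup_union, union_compl_self, iSup_univ, htop] at this
    exact lt_irrefl _ this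
  let F : Filter ι := Filter.comk (fun s => ⨆ i ∈ s, b i < ⊤) (by simp)
    (fun _ ht _ hst => (biSup_mono hst).trans_lt ht)
    (fun _ hs _ ht => by rw [iSup_union]; exact hfji _ _ hs ht)
  refine ⟨Ultrafilter.ofComplNotMemIff F fun s => ?_, hcompl⟩
  rw [Filter.mem_comk, Filter.mem_comk, compl_compl, hcompl, not_lt_top_iff]

theorem LatticeTB.exists_sSup_lt_top (htb : LatticeTB.{u, v} L) {Y : ℕ → Set L}
    (hY : ∀ k, (Y k).Nonempty) (hbdd : ∀ y : ℕ → L, (∀ k, y k ∈ Y k) → ⨆ k, y k < ⊤) :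
    ∃ k, sSup (Y k) < ⊤ := by
  by_contra! h
  have hfin := htb (ULift.{v} ℕ) (fun k => Y k.down) (fun k => hY k.down) fun y hy => by
    rw [← Equiv.ulift.symm.iSup_comp]
    exact hbdd _ fun k => hy _
  exact infinite_univ (hfin.subset fun k _ => h k.down)

theorem LatticeTB.exists_biSup_sSup_lt_top (htb : LatticeTB.{u, v} L) {X : ι → Set L}
    (hX : ∀ i, (X i).Nonempty) (hbdd : ∀ x : ι → L, (∀ i, x i ∈ X i) → ⨆ i, x i < ⊤)
    {N : ℕ → Set ι} (hN : Pairwise (Disjoint on N)) : ∃ k, ⨆ i ∈ N k, sSup (X i) < ⊤ := by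
  have hbot : (⊥ : L) < ⊤ := bot_le.trans_lt (hbdd _ fun i => (hX i).some_mem)
  by_cases hempty : ∃ k, N k = ∅
  · obtain ⟨k, hk⟩ := hempty
    exact ⟨k, by simpa [hk] using hbot⟩
  push Not at hempty
  simp only [← sSup_iUnion]
  refine htb.exists_sSup_lt_top (fun k => ?_) fun y hy => ?_
  · obtain ⟨i, hi⟩ := hempty k
    exact ⟨_, mem_biUnion hi (hX i).some_mem⟩
  simp only [mem_iUnion] at hy
  choose j hjN hjX using hy
  have hj : Injective j := fun k l h => hN.eq (not_disjoint_iff.2 ⟨j k, hjN k, h ▸ hjN l⟩)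
  -- glue the choices along the disjoint `N k` into a single transversal of `X`
  have hx : ∀ i, extend j y (fun i => (hX i).some) i ∈ X i := by
    intro i
    by_cases hi : ∃ k, j k = i
    · obtain ⟨k, rfl⟩ := hi
      rw [hj.extend_apply]
      exact hjX k
    · rw [extend_apply' _ _ _ hi]
      exact (hX i).some_mem
  refine lt_of_le_of_lt (iSup_le fun k => ?_) (hbdd _ hx)
  rw [← hj.extend_apply y (fun i => (hX i).some) k]
  exact le_iSup (extend j y fun i => (hX i).some) (j k)

theorem LatticeTB.exists_countable_subset_biSup_eq_top (htb : LatticeTB.{u, v} L) (a : ι → L)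
    {s : Set ι} (hs : ⨆ i ∈ s, a i = ⊤) : ∃ t ⊆ s, t.Countable ∧ ⨆ i ∈ t, a i = ⊤ := by
  by_contra! h
  have hne : s.Nonempty := nonempty_iff_ne_empty.2 fun hs₀ =>
    h ∅ (empty_subset s) countable_empty (hs₀ ▸ hs)
  obtain ⟨k, hk⟩ := htb.exists_sSup_lt_top (Y := fun _ => a '' s) (fun _ => hne.image a)
    fun y hy => by
      choose j hjs hjy using hy
      have hrange : ⨆ k, y k = ⨆ i ∈ range j, a i := by simp only [iSup_range, hjy]
      rw [hrange]
      exact lt_top_iff_ne_top.2 (h _ (range_subset_iff.2 hjs) (countable_range j))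
  rw [sSup_image, hs] at hk
  exact lt_irrefl _ hk

theorem exists_subset_forall_not_and_sdiff {α : Type*} {p : Set α → Prop} {s : Set α} (hs : p s)
    (hdisj : ∀ N : ℕ → Set α, Pairwise (Disjoint on N) → ∃ k, ¬ p (N k)) :
    ∃ t ⊆ s, p t ∧ ∀ u ⊆ t, p u → ¬ p (t \ u) := by
  by_contra! hsplit
  choose! piece hpiece_sub hpiece hrest using hsplit
  let R : ℕ → Set α := fun k => (fun t => t \ piece t)^[k] s
  have hR_succ : ∀ k, R (k + 1) = R k \ piece (R k) := fun k => iterate_succ_apply' _ k s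
  have hR : ∀ k, R k ⊆ s ∧ p (R k) := by
    intro k
    induction k with
    | zero => exact ⟨subset_rfl, hs⟩
    | succ k ih => exact hR_succ k ▸ ⟨sdiff_subset.trans ih.1, hrest _ ih.1 ih.2⟩
  have hR_anti : Antitone R := antitone_nat_of_succ_le fun k => hR_succ k ▸ sdiff_subset
  obtain ⟨k, hk⟩ := hdisj (fun k => piece (R k)) <| (pairwise_disjoint_on _).2 fun k l hkl =>
    have hl : piece (R l) ⊆ R (k + 1) := (hpiece_sub _ (hR l).1 (hR l).2).trans (hR_anti hkl)
    disjoint_sdiff_right.mono_right (hR_succ k ▸ hl)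
  exact hk (hpiece _ (hR k).1 (hR k).2)

theorem LatticeTB.exists_nat_seq_of_forall_not_and_sdiff (htb : LatticeTB.{u, v} L) [Nontrivial L]
    (hfji : ∀ a b : L, a < ⊤ → b < ⊤ → a ⊔ b < ⊤) {a : ι → L} {s : Set ι}
    (hlt : ∀ i ∈ s, a i < ⊤) (hs : ⨆ i ∈ s, a i = ⊤)
    (hatom : ∀ u ⊆ s, ⨆ i ∈ u, a i = ⊤ → ¬ ⨆ i ∈ s \ u, a i = ⊤) :
    ∃ b : ℕ → L, (∀ n, b n < ⊤) ∧ ⨆ n, b n = ⊤ ∧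
      ∀ A : Set ℕ, ⨆ n ∈ A, b n = ⊤ → ⨆ n ∈ Aᶜ, b n < ⊤ := by
  obtain ⟨t, hts, htc, ht⟩ := htb.exists_countable_subset_biSup_eq_top a hs
  have : Countable t := htc.to_subtype
  have : Infinite t := Set.infinite_coe_iff.2 fun hfin =>
    (biSup_lt_top_of_finite hfji hfin fun i hi => hlt i (hts hi)).ne ht
  obtain ⟨e⟩ := nonempty_equiv_of_countable (α := ℕ) (β := t)
  let f : ℕ → ι := fun n => e n
  have hf : Injective f := Subtype.val_injective.comp e.injective
  have hrange : range f = t := by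
    rw [range_comp' Subtype.val e, e.range_eq_univ, image_univ, Subtype.range_coe]
  refine ⟨a ∘ f, fun n => hlt _ (hts (e n).2), ?_, fun A hA => lt_top_iff_ne_top.2 fun hAc => ?_⟩
  · rw [← ht, ← hrange, iSup_range]
    rfl
  have himage : ∀ A : Set ℕ, ⨆ n ∈ A, (a ∘ f) n = ⨆ i ∈ f '' A, a i := fun _ => by
    rw [iSup_image]
    rfl
  rw [himage] at hA hAc
  rw [image_compl_eq_range_sdiff_image hf, hrange] at hAc
  refine hatom _ ((image_subset_range f A).trans (hrange ▸ hts)) hA (top_unique ?_)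
  exact hAc ▸ biSup_mono fun i hi => ⟨hts hi.1, hi.2⟩

theorem LatticeTB.isPPoint_of_mem_iff_biSup_eq_top (htb : LatticeTB.{u, v} L) {b : ℕ → L} (hb : ∀ n, b n < ⊤)
    {U : Ultrafilter ℕ} (hU : ∀ s, s ∈ U ↔ ⨆ n ∈ s, b n = ⊤) : IsPPoint U := by
  refine ⟨fun Y hY hYU => ?_, fun N hN hcover hNU => ?_⟩
  · obtain ⟨n, -, rfl⟩ := U.eq_pure_of_finite_mem hY hYU
    have := (hU {n}).1 (Ultrafilter.mem_pure.2 rfl)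
    rw [iSup_singleton] at this
    exact (hb n).ne this
  by_contra! hinf
  let R : ℕ → Set ℕ := fun k => ⋃ m ≥ k, N m
  have hR : ∀ k, R k ∈ U := by
    intro k
    have hsub : (R k)ᶜ ⊆ ⋃ m ∈ Iio k, N m := by
      intro n hn
      obtain ⟨m, hm⟩ := mem_iUnion.1 (hcover ▸ mem_univ n : n ∈ ⋃ m, N m)
      simp only [R, mem_compl_iff, mem_iUnion, not_exists] at hn
      exact mem_biUnion (not_le.1 fun hkm => hn m hkm hm) hm
    have hhead : (⋃ m ∈ Iio k, N m) ∉ U := fun h => by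
      obtain ⟨m, -, hm⟩ := (Ultrafilter.finite_biUnion_mem_iff (finite_Iio k)).1 h
      exact hNU m hm
    by_contra h
    exact hhead (U.mem_of_superset (Ultrafilter.compl_mem_iff_notMem.2 h) hsub)
  have hbdd : ∀ y : ℕ → L, (∀ k, y k ∈ b '' R k) → ⨆ k, y k < ⊤ := by
    intro y hy
    choose j hjR hjy using hy
    -- `j k` lies in some `N m` with `m ≥ k`, so only `j 0, …, j m` can lie in `N m`
    have hfin : ∀ m, (range j ∩ N m).Finite := by
      refine fun m => ((finite_Iic m).image j).subset ?_
      rintro _ ⟨⟨k, rfl⟩, hkm⟩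
      obtain ⟨m', hkm', hm'⟩ := mem_iUnion₂.1 (hjR k)
      obtain rfl : m' = m := hN.eq (not_disjoint_iff.2 ⟨j k, hm', hkm⟩)
      exact ⟨k, hkm', rfl⟩
    have hrange : ⨆ k, y k = ⨆ n ∈ range j, b n := by simp only [iSup_range, hjy]
    rw [hrange]
    refine lt_top_iff_ne_top.2 fun h => ?_
    obtain ⟨m, hm⟩ := hinf _ ((hU _).2 h)
    exact hm (hfin m)
  obtain ⟨k, hk⟩ := htb.exists_sSup_lt_top (fun k => (U.nonempty_of_mem (hR k)).image b) hbdd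
  exact hk.ne (sSup_image.trans ((hU _).1 (hR k)))

end

/-- If there exists a complete finitely join-irreducible lattice which is transversally
bounded but not uniformly transversally bounded, then there exists a p-point ultrafilter
on `ℕ`.  (Equivalently: if there is no p-point ultrafilter on `ℕ`, then every
transversally bounded complete finitely join-irreducible lattice is uniformly
transversally bounded.) -/
theorem exists_pPoint_of_exists_TB_not_UTB_lattice
    (L : Type u) [CompleteLattice L]
    (hfji : ∀ a b : L, a < ⊤ → b < ⊤ → a ⊔ b < ⊤)
    (htb : LatticeTB.{u, v} L) (hnutb : ¬ LatticeUTB.{u, v} L) :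
    ∃ U : Ultrafilter ℕ, IsPPoint U := by
  simp only [LatticeUTB, not_forall, not_exists, not_and] at hnutb
  obtain ⟨I, X, hX, hbdd, hJ⟩ := hnutb
  have : Nontrivial L := nontrivial_of_lt _ _ (bot_le.trans_lt (hbdd _ fun i => (hX i).some_mem))
  have hcofinite : ∀ J : Set I, Jᶜ.Finite → ⨆ i ∈ J, sSup (X i) = ⊤ := fun J hJc => by
    simpa only [sSup_iUnion, not_lt_top_iff] using hJ J hJc
  have hlt : ⨆ i ∈ {i | sSup (X i) < ⊤}, sSup (X i) = ⊤ := hcofinite _ (htb I X hX hbdd)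
  obtain ⟨s, hs_lt, hs, hatom⟩ := exists_subset_forall_not_and_sdiff
    (p := fun t => ⨆ i ∈ t, sSup (X i) = ⊤) hlt fun N hN =>
    (htb.exists_biSup_sSup_lt_top hX hbdd hN).imp fun _ => LT.lt.ne
  obtain ⟨b, hb, htop, hb_atom⟩ := htb.exists_nat_seq_of_forall_not_and_sdiff hfji
    (fun i hi => hs_lt hi) hs hatom
  obtain ⟨U, hU⟩ := exists_ultrafilter_mem_iff_biSup_eq_top hfji htop hb_atom
  exact ⟨U, htb.isPPoint_of_mem_iff_biSup_eq_top hb hU⟩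
end

section
/- Let L be a complete lattice which does not contain a complete upper subsemilattice isomorphic to the power set of omega, i.e. there is no injective map from the power set of omega into L preserving arbitrary joins. Let (X_i)_{i in I} be a family of nonempty subsets of L. Then there exists a finite subset F of I, together with a family (x_i)_{i in F} of elements x_i in X_i, such that every element of the union of the X_i over i in I minus F is tame relative to the join of the x_i over i in F. -/
universe u v w

/-- Given a family `(X i)_{i : I}` of subsets of a complete lattice `L`, an element `y`
of `L` is *tame* relative to an element `x` of `L` if there is an infinite subset
`K ⊆ I` together with elements `xk k ∈ X k` for `k ∈ K` such that
`x ⊔ ⨆ k ∈ S, xk k ≥ y` for every infinite subset `S` of `K`. -/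
def Tame {L : Type u} [CompleteLattice L] {I : Type v} (X : I → Set L) (x y : L) : Prop :=
  ∃ K : Set I, K.Infinite ∧ ∃ xk : I → L, (∀ k ∈ K, xk k ∈ X k) ∧
    ∀ S : Set I, S ⊆ K → S.Infinite → y ≤ x ⊔ ⨆ k ∈ S, xk k

/-- Let `L` be a complete lattice which does not contain a complete upper subsemilattice
isomorphic to the power set of `ℕ`, i.e. there is no injective map from `Set ℕ` into `L`
preserving arbitrary joins.  Then for every family `(X i)_{i : I}` of nonempty subsets of
`L` there is a finite subset `F` of `I`, together with elements `x i ∈ X i` for `i ∈ F`,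
such that every element of `⋃ i ∈ I \ F, X i` is tame relative to `⨆ i ∈ F, x i`. -/
theorem bergman_galvin_tame (L : Type u) [CompleteLattice L]
    (hL : ¬ ∃ f : Set ℕ → L, Function.Injective f ∧
      ∀ s : Set (Set ℕ), f (⋃₀ s) = ⨆ A ∈ s, f A)
    (I : Type v) (X : I → Set L) (hX : ∀ i, (X i).Nonempty) :
    ∃ F : Finset I, ∃ x : I → L, (∀ i ∈ F, x i ∈ X i) ∧
      ∀ i ∉ F, ∀ y ∈ X i, Tame X (⨆ j ∈ F, x j) y := by
  classical
  by_contra hcon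
  push_neg at hcon
  have hneI : Nonempty I := by
    obtain ⟨i0, -⟩ := hcon ∅ (fun i => (hX i).some) (by simp)
    exact ⟨i0⟩
  choose! iF hiF yF hyF htF using hcon
  -- auxiliary functions on lists of pairs
  set Fl : List (I × L) → Finset I := fun l => (l.map Prod.fst).toFinset with hFl
  set xf : List (I × L) → I → L := fun l j =>
    if hj : ∃ q ∈ l, q.1 = j then hj.choose.2 else (hX j).some with hxf
  have Fl_mem : ∀ (l : List (I × L)) (j : I), j ∈ Fl l ↔ ∃ q ∈ l, q.1 = j := by
    intro l j
    simp [hFl, List.mem_map, List.mem_toFinset]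
  have xf_mem : ∀ (l : List (I × L)), (∀ q ∈ l, q.2 ∈ X q.1) →
      ∀ j ∈ Fl l, xf l j ∈ X j := by
    intro l hl j hj
    rw [Fl_mem] at hj
    rw [hxf]
    simp only
    rw [dif_pos hj]
    obtain ⟨hq1, hq2⟩ := hj.choose_spec
    have := hl _ hq1
    rwa [hq2] at this
  -- the recursive sequence
  set step : List (I × L) → I × L := fun l => (iF (Fl l) (xf l), yF (Fl l) (xf l)) with hstepd
  set s : ℕ → List (I × L) := fun n => Nat.rec [] (fun _ l => l ++ [step l]) n with hsd
  have hs0 : s 0 = [] := rfl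
  have hss : ∀ n, s (n + 1) = s n ++ [step (s n)] := fun n => rfl
  set p : ℕ → I × L := fun n => step (s n) with hpd
  set ii : ℕ → I := fun n => (p n).1 with hiid
  set yy : ℕ → L := fun n => (p n).2 with hyyd
  have mem_s : ∀ n m, m < n → p m ∈ s n := by
    intro n
    induction n with
    | zero => intro m hm; omega
    | succ n ih =>
      intro m hm
      rw [hss]
      rcases Nat.lt_succ_iff_lt_or_eq.mp hm with h | rfl
      · exact List.mem_append_left _ (ih m h)
      · exact List.mem_append_right _ (List.mem_singleton_self _)
  have mem_s' : ∀ n q, q ∈ s n → ∃ m < n, q = p m := by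
    intro n
    induction n with
    | zero => intro q hq; rw [hs0] at hq; simp at hq
    | succ n ih =>
      intro q hq
      rw [hss] at hq
      rcases List.mem_append.mp hq with h | h
      · obtain ⟨m, hm, rfl⟩ := ih q h
        exact ⟨m, by omega, rfl⟩
      · exact ⟨n, by omega, List.mem_singleton.mp h⟩
  have good : ∀ n q, q ∈ s n → q.2 ∈ X q.1 := by
    intro n
    induction n with
    | zero => intro q hq; rw [hs0] at hq; simp at hq
    | succ n ih =>
      intro q hq
      rw [hss] at hq
      rcases List.mem_append.mp hq with h | h
      · exact ih q h
      · rw [List.mem_singleton.mp h]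
        exact hyF (Fl (s n)) (xf (s n)) (xf_mem (s n) ih)
  have hx : ∀ n, ∀ j ∈ Fl (s n), xf (s n) j ∈ X j := fun n => xf_mem (s n) (good n)
  have hnotmem : ∀ n, ii n ∉ Fl (s n) := fun n => hiF _ _ (hx n)
  set T : ℕ → L := fun n => ⨆ j ∈ Fl (s n), xf (s n) j with hTd
  have htame : ∀ n, ¬ Tame X (T n) (yy n) := fun n => htF _ _ (hx n)
  have hyyX : ∀ m, yy m ∈ X (ii m) := fun m => good (m + 1) (p m) (mem_s (m + 1) m (Nat.lt_succ_self m))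
  have Fl_spec : ∀ n j, j ∈ Fl (s n) ↔ ∃ m < n, ii m = j := by
    intro n j
    rw [Fl_mem]
    constructor
    · rintro ⟨q, hq, rfl⟩
      obtain ⟨m, hm, rfl⟩ := mem_s' n q hq
      exact ⟨m, hm, rfl⟩
    · rintro ⟨m, hm, rfl⟩
      exact ⟨p m, mem_s n m hm, rfl⟩
  have key_ne : ∀ a b, a < b → ii a ≠ ii b := by
    intro a b hab heq
    exact hnotmem b ((Fl_spec b (ii b)).mpr ⟨a, hab, heq⟩)
  have inj : Function.Injective ii := by
    intro a b hab
    rcases lt_trichotomy a b with h | h | h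
    · exact absurd hab (key_ne a b h)
    · exact h
    · exact absurd hab.symm (key_ne b a h)
  have bound : ∀ m n, m < n → yy m ≤ T n := by
    intro m n hmn
    have hj : ∃ q ∈ s n, q.1 = ii m := ⟨p m, mem_s n m hmn, rfl⟩
    have hxe : xf (s n) (ii m) = yy m := by
      rw [hxf]
      simp only
      rw [dif_pos hj]
      obtain ⟨hq1, hq2⟩ := hj.choose_spec
      obtain ⟨m', hm', hq⟩ := mem_s' n _ hq1
      have : m' = m := inj (by rw [← hq2, hq])
      rw [hq, this]
    calc yy m = xf (s n) (ii m) := hxe.symm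
    _ ≤ T n := le_iSup₂ (f := fun j (_ : j ∈ Fl (s n)) => xf (s n) j) (ii m)
        ((Fl_spec n (ii m)).mpr ⟨m, hmn, rfl⟩)
  -- shrink lemma
  have hinv : ∀ m, Function.invFun ii (ii m) = m := Function.leftInverse_invFun inj
  have shrink : ∀ (n : ℕ) (A : Set ℕ), A.Infinite →
      ∃ B ⊆ A, B.Infinite ∧ ¬ yy n ≤ T n ⊔ ⨆ m ∈ B, yy m := by
    intro n A hA
    have ht := htame n
    rw [Tame] at ht
    push_neg at ht
    set xk : I → L := fun k => yy (Function.invFun ii k) with hxkd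
    obtain ⟨S, hSK, hSinf, hS⟩ := ht (ii '' A) (hA.image inj.injOn) xk
      (by rintro k ⟨m, hm, rfl⟩
          show yy (Function.invFun ii (ii m)) ∈ X (ii m)
          rw [hinv]; exact hyyX m)
    set B : Set ℕ := {m ∈ A | ii m ∈ S} with hBd
    have hBA : B ⊆ A := fun m hm => hm.1
    have hSB : S = ii '' B := by
      apply subset_antisymm
      · intro k hk
        obtain ⟨m, hm, rfl⟩ := hSK hk
        exact ⟨m, ⟨hm, hk⟩, rfl⟩
      · rintro k ⟨m, hm, rfl⟩
        exact hm.2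
    have hBinf : B.Infinite := by
      rw [hSB] at hSinf
      exact Set.Infinite.of_image _ hSinf
    refine ⟨B, hBA, hBinf, ?_⟩
    have hsup : ⨆ k ∈ S, xk k = ⨆ m ∈ B, yy m := by
      rw [hSB, iSup_image]
      exact iSup_congr fun m => iSup_congr fun _ => by
        show yy (Function.invFun ii (ii m)) = yy m
        rw [hinv]
    rw [← hsup]
    exact hS
  -- fusion
  have stepEx : ∀ q : ℕ × Set ℕ, q.2.Infinite →
      ∃ q' : ℕ × Set ℕ, q'.2.Infinite ∧ q'.1 ∈ q.2 ∧ q'.2 ⊆ q.2 ∧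
        (∀ m ∈ q'.2, q'.1 < m) ∧ ¬ yy q'.1 ≤ T q'.1 ⊔ ⨆ m ∈ q'.2, yy m := by
    intro q hq
    obtain ⟨a, ha⟩ := hq.nonempty
    have h2 : (q.2 ∩ Set.Ioi a).Infinite := by
      have : q.2 \ Set.Iic a = q.2 ∩ Set.Ioi a := by
        ext m; simp [Set.mem_diff, Set.mem_Iic, Set.mem_Ioi, Set.mem_inter_iff]
      rw [← this]
      exact hq.diff (Set.finite_Iic a)
    obtain ⟨B, hBsub, hBinf, hbad⟩ := shrink a (q.2 ∩ Set.Ioi a) h2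
    exact ⟨(a, B), hBinf, ha, fun m hm => (hBsub hm).1, fun m hm => (hBsub hm).2, hbad⟩
  choose! stepF hstepF using stepEx
  set st : ℕ → ℕ × Set ℕ := fun k => Nat.rec (stepF (0, Set.Ioi 0)) (fun _ q => stepF q) k
    with hstd
  set nn : ℕ → ℕ := fun k => (st k).1 with hnnd
  set AA : ℕ → Set ℕ := fun k => (st k).2 with hAAd
  have hst0 : st 0 = stepF (0, Set.Ioi 0) := rfl
  have hstS : ∀ k, st (k + 1) = stepF (st k) := fun k => rfl
  have hIoi : (Set.Ioi 0 : Set ℕ).Infinite := Set.Ioi_infinite 0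
  have hinfA : ∀ k, (AA k).Infinite := by
    intro k
    induction k with
    | zero => exact (hstepF (0, Set.Ioi 0) hIoi).1
    | succ k ih =>
      show (st (k+1)).2.Infinite
      rw [hstS]
      exact (hstepF (st k) ih).1
  have main : ∀ k, (∀ m ∈ AA k, nn k < m) ∧ ¬ yy (nn k) ≤ T (nn k) ⊔ ⨆ m ∈ AA k, yy m := by
    intro k
    cases k with
    | zero =>
      have h := hstepF (0, Set.Ioi 0) hIoi
      exact ⟨h.2.2.2.1, h.2.2.2.2⟩
    | succ k =>
      have h := hstepF (st k) (hinfA k)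
      exact ⟨h.2.2.2.1, h.2.2.2.2⟩
  have hmem : ∀ k, nn (k + 1) ∈ AA k := fun k => (hstepF (st k) (hinfA k)).2.1
  have hsubA : ∀ k, AA (k + 1) ⊆ AA k := fun k => (hstepF (st k) (hinfA k)).2.2.1
  have hmono : StrictMono nn := strictMono_nat_of_lt_succ fun k => (main k).1 _ (hmem k)
  have hsubA' : ∀ k l, k ≤ l → AA l ⊆ AA k := by
    intro k l hkl
    induction l, hkl using Nat.le_induction with
    | base => exact subset_rfl
    | succ l hkl ih => exact (hsubA l).trans ih
  have hmemA : ∀ k j, k < j → nn j ∈ AA k := by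
    intro k j hkj
    obtain ⟨l, rfl⟩ : ∃ l, j = l + 1 := ⟨j - 1, by omega⟩
    exact hsubA' k l (by omega) (hmem l)
  -- the embedding of Set ℕ
  set z : ℕ → L := fun k => yy (nn k) with hzd
  set f : Set ℕ → L := fun A => ⨆ k ∈ A, z k with hfd
  apply hL
  refine ⟨f, ?_, ?_⟩
  · have key : ∀ (A B : Set ℕ) (k : ℕ), k ∈ A → k ∉ B → f A ≠ f B := by
      intro A B k hkA hkB heq
      have h1 : z k ≤ f A := le_iSup₂ (f := fun j (_ : j ∈ A) => z j) k hkA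
      have h2 : f B ≤ T (nn k) ⊔ ⨆ m ∈ AA k, yy m := by
        refine iSup₂_le fun j hj => ?_
        rcases lt_trichotomy j k with hjk | rfl | hjk
        · exact le_sup_of_le_left (bound (nn j) (nn k) (hmono hjk))
        · exact absurd hj hkB
        · exact le_sup_of_le_right
            (le_iSup₂ (f := fun m (_ : m ∈ AA k) => yy m) (nn j) (hmemA k j hjk))
      exact (main k).2 ((heq ▸ h1).trans h2)
    intro A B hAB
    by_contra hne
    have : ∃ k, (k ∈ A ∧ k ∉ B) ∨ (k ∈ B ∧ k ∉ A) := by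
      by_contra h
      push_neg at h
      apply hne
      ext k
      have := h k
      tauto
    obtain ⟨k, ⟨h1, h2⟩ | ⟨h1, h2⟩⟩ := this
    · exact key A B k h1 h2 hAB
    · exact key B A k h1 h2 hAB.symm
  · intro sets
    apply le_antisymm
    · refine iSup₂_le fun k hk => ?_
      obtain ⟨A, hA, hkA⟩ := hk
      exact le_trans (le_iSup₂ (f := fun j (_ : j ∈ A) => z j) k hkA)
        (le_iSup₂ (f := fun A (_ : A ∈ sets) => f A) A hA)
    · refine iSup₂_le fun A hA => ?_
      refine iSup₂_le fun k hk => ?_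
      exact le_iSup₂ (f := fun j (_ : j ∈ ⋃₀ sets) => z j) k ⟨A, hA, hk⟩
end

section
/- For a commutative integral domain R, transversal boundedness of the dual ideal lattice L_R implies that R is weakly productively bounded. -/
set_option linter.unnecessarySimpa false


universe u v w

/-- For a commutative integral domain `R`, transversal boundedness of the dual ideal
lattice `L_R` implies that `R` is weakly productively bounded. -/
theorem weaklyProductivelyBounded_of_idealTB
    (R : Type u) [CommRing R] [IsDomain R]
    (h : IdealTB.{u, v} R) :
    WeaklyProductivelyBounded.{u, v, w} R := by
  intro I M _ _ htor
  -- For each i, X i is the set of annihilators of elements of M i.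
  set X : I → Set (Ideal R) :=
    fun i => Set.range (fun m : M i => LinearMap.ker (LinearMap.toSpanSingleton R (M i) m))
    with hX
  have hinf : ∀ i, sInf (X i) = Module.annihilator R (M i) := by
    intro i
    ext r
    simp only [Submodule.mem_sInf, Module.mem_annihilator, hX, Set.mem_range,
      forall_exists_index]
    constructor
    · intro hr m
      have := hr _ m rfl
      simpa [LinearMap.mem_ker, LinearMap.toSpanSingleton_apply] using this
    · intro hr p m hm
      subst hm
      simpa [LinearMap.mem_ker, LinearMap.toSpanSingleton_apply] using hr m
  have hfin := h I X (fun i => ⟨_, ⟨(0 : M i), rfl⟩⟩) ?_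
  · convert hfin using 2
    ext i
    simp [hinf i]
  · intro A hA
    choose m hm using hA
    obtain ⟨r, hr⟩ := @htor m
    intro hbot
    have hrmem : (r : R) ∈ (⨅ i, A i) := by
      rw [Submodule.mem_iInf]
      intro i
      rw [← hm i]
      simp only [LinearMap.mem_ker, LinearMap.toSpanSingleton_apply]
      exact congrFun hr i
    rw [hbot] at hrmem
    exact nonZeroDivisors.coe_ne_zero r (by simpa using hrmem)
end

section
/- For a commutative integral domain R, uniform transversal boundedness of the dual ideal lattice L_R implies that R is productively bounded. -/
universe u v w

/-- A commutative integral domain `R` is *productively bounded* if, for every family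
`(M i)_{i : I}` of `R`-modules whose direct product is a torsion module, there is a
cofinite subset `J` of `I` such that the intersection of the annihilators
`ann_R (M i)`, for `i ∈ J`, is nonzero. -/
def ProductivelyBounded (R : Type u) [CommRing R] [IsDomain R] : Prop :=
  ∀ (I : Type v) (M : I → Type w) [∀ i, AddCommGroup (M i)] [∀ i, Module R (M i)],
    Module.IsTorsion R (∀ i, M i) →
      ∃ J : Set I, Jᶜ.Finite ∧ (⨅ i ∈ J, Module.annihilator R (M i)) ≠ ⊥

/-- For a commutative integral domain `R`, uniform transversal boundedness of the dual
ideal lattice `L_R` implies that `R` is productively bounded. -/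
theorem productivelyBounded_of_idealUTB
    (R : Type u) [CommRing R] [IsDomain R]
    (h : IdealUTB.{u, v} R) :
    ProductivelyBounded.{u, v, w} R := by
  intro I M _ _ htor
  obtain ⟨J, hJ, hne⟩ := h I
    (fun i => Set.range (fun m : M i => Ideal.torsionOf R (M i) m))
    (fun i => ⟨_, ⟨0, rfl⟩⟩)
    (by
      intro A hA hbot
      choose m hm using hA
      obtain ⟨r, hr⟩ := @htor m
      have hmem : (r : R) ∈ ⨅ i, A i := by
        rw [Ideal.mem_iInf]
        intro i
        rw [← hm i, Ideal.mem_torsionOf_iff]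
        exact congrFun hr i
      rw [hbot] at hmem
      exact nonZeroDivisors.coe_ne_zero r (Ideal.mem_bot.mp hmem))
  refine ⟨J, hJ, fun hbot => hne ?_⟩
  rw [eq_bot_iff] at hbot ⊢
  refine le_trans ?_ hbot
  refine le_iInf₂ fun i hi => ?_
  intro r hr
  rw [Module.mem_annihilator]
  intro m
  rw [← Ideal.mem_torsionOf_iff]
  exact Ideal.mem_sInf.mp hr (Set.mem_biUnion hi ⟨m, rfl⟩)
end

section
/- Let R be a commutative integral domain, U a nonprincipal ultrafilter on omega, and (A_n)_{n in omega} a family of ideals of R such that for every subset Y of omega the intersection of the A_n over n in Y is zero if and only if Y belongs to U. For each infinite subset S of omega with S not in U, let B_S be the union over m in omega of the ideals B_{S,m}, where B_{S,m} is the intersection of the A_n over n in S with n > m. Then each B_S is a nonzero ideal of R, and the intersection of the ideals B_S, taken over all infinite subsets S of omega not belonging to U, is zero. -/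
/-!
Intersecting the `A n` over `Y = {n | x ∈ A n}` shows that a nonzero `x` lies outside `A n`
for a `U`-large, hence infinite, set `Z` of indices. Splitting `Z` into two disjoint infinite
halves, one half `S` is not in `U`, and `x ∉ B_S` because `x` misses `A n` for every `n ∈ S`.
That `B_S ≠ 0` is immediate: `B_S` contains `B_{S,0}`, which vanishes only if `S ∈ U`.
-/

open Filter

theorem Set.Infinite.exists_disjoint_infinite_subsets {α : Type*} {Z : Set α}
    (hZ : Z.Infinite) :
    ∃ S ⊆ Z, ∃ T ⊆ Z, S.Infinite ∧ T.Infinite ∧ Disjoint S T := by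
  set e := hZ.natEmbedding Z
  have he : Function.Injective (fun k => (e k : α)) := Subtype.val_injective.comp e.injective
  refine ⟨Set.range (fun k => (e (2 * k) : α)), ?_, Set.range (fun k => (e (2 * k + 1) : α)),
    ?_, Set.infinite_range_of_injective fun a b h => ?_,
    Set.infinite_range_of_injective fun a b h => ?_, ?_⟩
  · rintro _ ⟨k, rfl⟩; exact (e _).2
  · rintro _ ⟨k, rfl⟩; exact (e _).2
  · have := he h; omega
  · have := he h; omega
  · rw [Set.disjoint_left]
    rintro _ ⟨a, rfl⟩ ⟨b, hb⟩
    have := he hb; omega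

theorem Ultrafilter.exists_infinite_subset_notMem {α : Type*} (U : Ultrafilter α) {Z : Set α}
    (hZ : Z.Infinite) : ∃ S ⊆ Z, S.Infinite ∧ S ∉ U := by
  obtain ⟨S, hSZ, T, hTZ, hS, hT, hST⟩ := hZ.exists_disjoint_infinite_subsets
  by_contra! h
  exact U.empty_notMem (hST.inter_eq ▸ inter_mem (h S hSZ hS) (h T hTZ hT))

namespace Submodule

variable {R M : Type*} [Semiring R] [AddCommMonoid M] [Module R M]

/-- The paper's `B_S`. -/
def liminfOn (A : ℕ → Submodule R M) (S : Set ℕ) : Submodule R M :=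
  ⨆ m, ⨅ n ∈ {n ∈ S | m < n}, A n

variable {A : ℕ → Submodule R M} {S : Set ℕ} {x : M}

theorem mem_liminfOn_iff :
    x ∈ liminfOn A S ↔ ∀ᶠ n in atTop, n ∈ S → x ∈ A n := by
  have hmono : Monotone fun m => ⨅ n ∈ {n ∈ S | m < n}, A n :=
    fun m m' hm => biInf_mono fun n hn => ⟨hn.1, hm.trans_lt hn.2⟩
  rw [liminfOn, mem_iSup_of_directed _ hmono.directed_le, eventually_atTop]
  simp only [mem_iInf]
  constructor
  · rintro ⟨m, hm⟩
    exact ⟨m + 1, fun n hn hnS => hm n ⟨hnS, hn⟩⟩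
  · rintro ⟨m, hm⟩
    exact ⟨m, fun n hn => hm n hn.2.le hn.1⟩

theorem notMem_liminfOn (hS : S.Infinite) (hx : ∀ n ∈ S, x ∉ A n) : x ∉ liminfOn A S := by
  rw [mem_liminfOn_iff]
  intro h
  obtain ⟨n, hnS, hxn⟩ := ((Nat.frequently_atTop_iff_infinite.2 hS).and_eventually h).exists
  exact hx n hnS (hxn hnS)

theorem liminfOn_ne_bot {F : Filter ℕ}
    (hA : ∀ Y : Set ℕ, (⨅ n ∈ Y, A n) = ⊥ → Y ∈ F) (hS : S ∉ F) :
    liminfOn A S ≠ ⊥ := by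
  intro h
  have h0 : (⨅ n ∈ {n ∈ S | 0 < n}, A n) = ⊥ :=
    le_bot_iff.1 (h ▸ le_iSup (fun m => ⨅ n ∈ {n ∈ S | m < n}, A n) 0)
  exact hS (mem_of_superset (hA _ h0) fun _ hn => hn.1)

theorem setOf_notMem_mem_ultrafilter {U : Ultrafilter ℕ}
    (hA : ∀ Y ∈ U, (⨅ n ∈ Y, A n) = ⊥) (hx : x ≠ 0) : {n | x ∉ A n} ∈ U := by
  refine Ultrafilter.compl_mem_iff_notMem.2 fun hY => hx ?_
  have hxY : x ∈ ⨅ n ∈ {n | x ∈ A n}, A n := by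
    simp only [mem_iInf]
    exact fun _ hn => hn
  exact (mem_bot R).1 (hA _ hY ▸ hxY)

end Submodule

open Submodule in
theorem BS_nonzero_and_inter_BS_eq_bot_general
    (R : Type u) [CommRing R]
    (U : Ultrafilter ℕ) (hU : ∀ Y : Set ℕ, Y.Finite → Y ∉ U)
    (A : ℕ → Ideal R) (hA : ∀ Y : Set ℕ, (⨅ n ∈ Y, A n) = ⊥ ↔ Y ∈ U) :
    (∀ S : Set ℕ, S.Infinite → S ∉ U →
        (⨆ m, ⨅ n ∈ {n ∈ S | m < n}, A n) ≠ ⊥) ∧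
      (⨅ (S : Set ℕ) (_ : S.Infinite) (_ : S ∉ U),
        ⨆ m, ⨅ n ∈ {n ∈ S | m < n}, A n) = ⊥ := by
  refine ⟨fun S _ hS => liminfOn_ne_bot (fun Y => (hA Y).1) hS, ?_⟩
  refine eq_bot_iff.2 fun x hx => (mem_bot R).2 (not_not.1 fun hx0 => ?_)
  have hZ : {n | x ∉ A n} ∈ U := setOf_notMem_mem_ultrafilter (fun Y => (hA Y).2) hx0
  obtain ⟨S, hSZ, hS, hSU⟩ := U.exists_infinite_subset_notMem fun hfin => hU _ hfin hZ
  have hxS : x ∈ liminfOn A S := (mem_iInf _).1 ((mem_iInf _).1 ((mem_iInf _).1 hx S) hS) hSU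
  exact notMem_liminfOn hS hSZ hxS

/-- Let `R` be a commutative integral domain, `U` a nonprincipal ultrafilter on `ℕ`, and
`(A n)_{n : ℕ}` a family of ideals of `R` such that for every `Y ⊆ ℕ` the intersection of
the `A n`, for `n ∈ Y`, is zero iff `Y ∈ U`.  For each infinite `S ⊆ ℕ` with `S ∉ U`, let
`B S` be the union over `m` of the ideals `B_{S,m} = ⋂ {A n : n ∈ S, n > m}` (an
ascending chain of ideals).  Then each `B S` is nonzero, and the intersection of the
`B S`, over all infinite `S ∉ U`, is zero. -/
theorem BS_nonzero_and_inter_BS_eq_bot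
    (R : Type u) [CommRing R] [IsDomain R]
    (U : Ultrafilter ℕ) (hU : ∀ Y : Set ℕ, Y.Finite → Y ∉ U)
    (A : ℕ → Ideal R) (hA : ∀ Y : Set ℕ, (⨅ n ∈ Y, A n) = ⊥ ↔ Y ∈ U) :
    (∀ S : Set ℕ, S.Infinite → S ∉ U →
        (⨆ m, ⨅ n ∈ {n ∈ S | m < n}, A n) ≠ ⊥) ∧
      (⨅ (S : Set ℕ) (_ : S.Infinite) (_ : S ∉ U),
        ⨆ m, ⨅ n ∈ {n ∈ S | m < n}, A n) = ⊥ :=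
  BS_nonzero_and_inter_BS_eq_bot_general R U hU A hA
end

section
/- Let R be a commutative integral domain, U a p-point ultrafilter on omega, and (A_n)_{n in omega} any family of ideals of R. For each infinite subset S of omega with S not in U, let B_S be the union over m in omega of the intersections of the A_n over n in S with n > m. Then for every countable family (S_n)_{n in omega} of infinite subsets of omega not belonging to U, there exists an infinite subset S of omega with S not in U such that B_S is contained in the intersection of the B_{S_n} over n in omega. -/
universe u v w

/-- The increasing unions `S' 0 ∪ ⋯ ∪ S' k`. -/
def AccS (S' : ℕ → Set ℕ) : ℕ → Set ℕ
  | 0 => S' 0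
  | (k+1) => AccS S' k ∪ S' (k+1)

lemma accS_mono (S' : ℕ → Set ℕ) : Monotone (AccS S') := by
  apply monotone_nat_of_le_succ
  intro k
  exact Set.subset_union_left

lemma subset_accS (S' : ℕ → Set ℕ) (k : ℕ) : S' k ⊆ AccS S' k := by
  cases k with
  | zero => exact subset_rfl
  | succ j => exact Set.subset_union_right

lemma accS_subset_iUnion (S' : ℕ → Set ℕ) (k : ℕ) : AccS S' k ⊆ ⋃ i, S' i := by
  induction k with
  | zero => exact Set.subset_iUnion S' 0
  | succ j ih => exact Set.union_subset ih (Set.subset_iUnion S' (j+1))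

lemma accS_not_mem (U : Ultrafilter ℕ) (S' : ℕ → Set ℕ) (hnU : ∀ k, S' k ∉ U) (k : ℕ) :
    AccS S' k ∉ U := by
  induction k with
  | zero => exact hnU 0
  | succ j ih =>
    intro h
    rcases Ultrafilter.union_mem_iff.mp h with h | h
    · exact ih h
    · exact hnU (j+1) h

/-- Key combinatorial lemma: from a p-point, find `S ∉ U` almost containing all `S' k`. -/
lemma exists_almost_superset (U : Ultrafilter ℕ) (hU : IsPPoint U)
    (S' : ℕ → Set ℕ) (hinf : ∀ k, (S' k).Infinite) (hnU : ∀ k, S' k ∉ U) :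
    ∃ S : Set ℕ, S.Infinite ∧ S ∉ U ∧ ∀ k, (S' k \ S).Finite := by
  classical
  set D : Set ℕ := ⋃ i, S' i with hD
  by_cases hDU : D ∈ U
  · -- partition case
    set N : ℕ → Set ℕ := fun k =>
      Nat.rec (AccS S' 0 ∪ Dᶜ) (fun j _ => AccS S' (j+1) \ AccS S' j) k with hN
    have hN0 : N 0 = AccS S' 0 ∪ Dᶜ := rfl
    have hNs : ∀ j, N (j+1) = AccS S' (j+1) \ AccS S' j := fun j => rfl
    have hNsub : ∀ k, N k ⊆ AccS S' k ∪ Dᶜ := by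
      intro k
      cases k with
      | zero => exact subset_rfl
      | succ j => exact (Set.diff_subset).trans Set.subset_union_left
    have hdis : Pairwise (fun k l => Disjoint (N k) (N l)) := by
      have key : ∀ k l, k < l → Disjoint (N k) (N l) := by
        intro k l hkl
        obtain ⟨m, rfl⟩ : ∃ m, l = m + 1 := ⟨l - 1, by omega⟩
        rw [hNs]
        refine Set.disjoint_of_subset (hNsub k) subset_rfl ?_
        rw [Set.disjoint_union_left]
        constructor
        · exact Set.disjoint_of_subset (accS_mono S' (Nat.lt_succ_iff.mp hkl)) subset_rfl
            (Set.disjoint_sdiff_right)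
        · refine Set.disjoint_of_subset subset_rfl
            ((Set.diff_subset).trans (accS_subset_iUnion S' (m+1))) ?_
          exact disjoint_compl_left
      intro k l hne
      rcases hne.lt_or_gt with h | h
      · exact key k l h
      · exact (key l k h).symm
    have hcov : (⋃ k, N k) = Set.univ := by
      apply Set.eq_univ_of_forall
      intro x
      by_cases hx : x ∈ D
      · rw [hD, Set.mem_iUnion] at hx
        obtain ⟨i, hi⟩ := hx
        have hex : ∃ k, x ∈ AccS S' k := ⟨i, subset_accS S' i hi⟩
        set k := Nat.find hex with hk
        have hxk : x ∈ AccS S' k := Nat.find_spec hex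
        apply Set.mem_iUnion.mpr
        cases hk' : k with
        | zero => exact ⟨0, Or.inl (by rw [hk'] at hxk; exact hxk)⟩
        | succ j =>
          refine ⟨j+1, ?_⟩
          rw [hNs]
          refine ⟨by rw [hk'] at hxk; exact hxk, ?_⟩
          exact Nat.find_min hex (by omega)
      · exact Set.mem_iUnion.mpr ⟨0, Or.inr hx⟩
    have hnmem : ∀ k, N k ∉ U := by
      intro k
      cases k with
      | zero =>
        rw [hN0]
        intro h
        rcases Ultrafilter.union_mem_iff.mp h with h | h
        · exact accS_not_mem U S' hnU 0 h
        · exact (Ultrafilter.compl_mem_iff_notMem.mp h) hDU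
      | succ j =>
        rw [hNs]
        intro h
        exact accS_not_mem U S' hnU (j+1) (U.mem_of_superset h Set.diff_subset)
    obtain ⟨Y, hYU, hYfin⟩ := hU.2 N hdis hcov hnmem
    have hYacc : ∀ k, (Y ∩ AccS S' k).Finite := by
      intro k
      induction k with
      | zero =>
        refine (hYfin 0).subset ?_
        rw [hN0]
        exact Set.inter_subset_inter_right Y Set.subset_union_left
      | succ j ih =>
        refine (ih.union (hYfin (j+1))).subset ?_
        rw [hNs, show AccS S' (j+1) = AccS S' j ∪ S' (j+1) from rfl]
        intro x ⟨hxY, hx⟩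
        by_cases hxa : x ∈ AccS S' j
        · exact Or.inl ⟨hxY, hxa⟩
        · exact Or.inr ⟨hxY, hx, hxa⟩
    refine ⟨Yᶜ ∪ S' 0, (hinf 0).mono Set.subset_union_right, ?_, ?_⟩
    · intro h
      rcases Ultrafilter.union_mem_iff.mp h with h | h
      · exact (Ultrafilter.compl_mem_iff_notMem.mp h) hYU
      · exact hnU 0 h
    · intro k
      refine (hYacc k).subset ?_
      intro x ⟨hx, hxn⟩
      refine ⟨?_, subset_accS S' k hx⟩
      by_contra hxY
      exact hxn (Or.inl hxY)
  · -- D itself works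
    refine ⟨D, (hinf 0).mono (Set.subset_iUnion S' 0), hDU, fun k => ?_⟩
    have : S' k \ D = ∅ := Set.diff_eq_empty.mpr (Set.subset_iUnion S' k)
    rw [this]; exact Set.finite_empty

/-- Let `R` be a commutative integral domain, `U` a p-point ultrafilter on `ℕ`, and
`(A n)_{n : ℕ}` any family of ideals of `R`.  For each infinite `S ⊆ ℕ` with `S ∉ U`, let
`B S` be the union over `m` of the ideals `⋂ {A n : n ∈ S, n > m}`.  Then for every
countable family `(S' k)_{k : ℕ}` of infinite subsets of `ℕ` not belonging to `U`, there
is an infinite `S ⊆ ℕ` with `S ∉ U` such that `B S ⊆ ⋂ k, B (S' k)`. -/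
theorem exists_BS_le_iInf_of_pPoint
    (R : Type u) [CommRing R] [IsDomain R]
    (U : Ultrafilter ℕ) (hU : IsPPoint U) (A : ℕ → Ideal R)
    (S' : ℕ → Set ℕ) (hinf : ∀ k, (S' k).Infinite) (hnU : ∀ k, S' k ∉ U) :
    ∃ S : Set ℕ, S.Infinite ∧ S ∉ U ∧
      (⨆ m, ⨅ n ∈ {n ∈ S | m < n}, A n) ≤
        ⨅ k, ⨆ m, ⨅ n ∈ {n ∈ S' k | m < n}, A n := by
  obtain ⟨S, hSinf, hSU, hfin⟩ := exists_almost_superset U hU S' hinf hnU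
  refine ⟨S, hSinf, hSU, ?_⟩
  refine le_iInf fun k => iSup_le fun m => ?_
  obtain ⟨M, hM⟩ : ∃ M, ∀ n ∈ S' k \ S, n ≤ M := by
    rcases (hfin k).bddAbove with ⟨M, hM⟩
    exact ⟨M, fun n hn => hM hn⟩
  refine le_iSup_of_le (max m M) ?_
  apply le_iInf₂
  intro n hn
  have hnS : n ∈ {n | n ∈ S ∧ m < n} := by
    obtain ⟨hn1, hn2⟩ := hn
    constructor
    · by_contra hns
      exact absurd (hM n ⟨hn1, hns⟩) (by omega)
    · omega
  exact iInf₂_le n hnS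
end
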